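/- arXiv:1502.03037 — 6 statements merged into one kernel-verified Lean document; each statement's English description precedes it below -/
import Mathlib

section
/- Let n ≥ 1 and consider the 2n×2n grid graph. For every cell c and every cell c' adjacent to c, there exists a Hamiltonian path whose first vertex is c and whose second vertex is c'. That is, a maximum walk of length (2n)² − 1 can be initiated at any cell through any prescribed neighboring side. -/
/-!
For even `m` the `m × m` grid has a Hamiltonian cycle, the snake: along row `0`, then back and
forth along rows `1, …, m - 1` restricted to columns `1, …, m - 1`, then up column `0`.
Going around a Hamiltonian cycle, in either direction, from any edge of it gives a Hamiltonian
path with that edge as first step. The only horizontal edges missed by the snake are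
`(i, 0)–(i, 1)` with `0 < i < m - 1`, and reflecting the columns maps them onto snake edges;
transposing turns vertical edges into horizontal ones.
-/

/-- The `m × m` grid graph on cells `Fin m × Fin m`: two cells are adjacent iff
`|i - i| + |j - j| = 1`, i.e. they agree in one coordinate and the other
coordinates differ by exactly 1. -/
def gridGraph (m : ℕ) : SimpleGraph (Fin m × Fin m) where
  Adj c c' := ((c.1 : ℤ) - (c'.1 : ℤ)).natAbs + ((c.2 : ℤ) - (c'.2 : ℤ)).natAbs = 1
  symm := ⟨by intro c c' h; omega⟩
  loopless := ⟨by intro c; simp⟩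

instance (m : ℕ) : DecidableRel (gridGraph m).Adj :=
  fun _ _ => inferInstanceAs (Decidable (_ = 1))

open Function

namespace SimpleGraph

variable {V W : Type*} [DecidableEq V] [DecidableEq W] {G : SimpleGraph V} {H : SimpleGraph W}

def HasHamiltonianPathStartingWith (G : SimpleGraph V) (u v : V) : Prop :=
  ∃ (w : V) (p : G.Walk u w), p.IsHamiltonian ∧ p.getVert 1 = v

theorem HasHamiltonianPathStartingWith.map (φ : G ≃g H) {u v : V}
    (h : G.HasHamiltonianPathStartingWith u v) : H.HasHamiltonianPathStartingWith (φ u) (φ v) := by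
  obtain ⟨w, p, hp, hv⟩ := h
  exact ⟨φ w, p.map φ.toHom, hp.map _ φ.bijective, by simp [Walk.getVert_map, hv]⟩

theorem Iso.hasHamiltonianPathStartingWith_iff (φ : G ≃g H) {u v : V} :
    H.HasHamiltonianPathStartingWith (φ u) (φ v) ↔ G.HasHamiltonianPathStartingWith u v :=
  ⟨fun h ↦ by simpa using h.map φ.symm, (·.map φ)⟩

theorem hasHamiltonianPathStartingWith_of_bijective {k : ℕ} (e : Fin (k + 2) → V)
    (he : Bijective e)
    (hadj : ∀ (i : ℕ) (hi : i + 1 < k + 2), G.Adj (e ⟨i, by omega⟩) (e ⟨i + 1, hi⟩)) :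
    G.HasHamiltonianPathStartingWith (e 0) (e 1) := by
  have hchain := List.isChain_ofFn.2 hadj
  have hnodup := List.nodup_ofFn.2 he.injective
  have hmem (w : V) : w ∈ List.ofFn e := List.mem_ofFn.2 (he.surjective w)
  rw [List.ofFn_succ, List.ofFn_succ, Fin.succ_zero_eq_one] at hchain hnodup hmem
  let p := Walk.ofSupport _ (List.cons_ne_nil _ _) hchain
  refine ⟨_, p, ((Walk.isPath_def p).2 ?_).isHamiltonian_of_mem ?_, ?_⟩
  · rwa [Walk.support_ofSupport]
  · rwa [Walk.support_ofSupport]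
  · simp only [p, Walk.ofSupport_cons_cons]
    exact (Walk.getVert_cons_succ (n := 0) _ _).trans (Walk.getVert_zero _)

theorem hasHamiltonianPathStartingWith_of_bijective_zmod {N : ℕ} [NeZero N] (σ : ZMod N → V)
    (hσ : Bijective σ) (hadj : ∀ i, G.Adj (σ i) (σ (i + 1))) (i : ZMod N) :
    G.HasHamiltonianPathStartingWith (σ i) (σ (i + 1)) := by
  obtain ⟨k, rfl⟩ : ∃ k, N = k + 2 := by
    have : N ≠ 1 := by
      rintro rfl
      exact (hadj 0).ne (congrArg σ (Subsingleton.elim _ _))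
    exact ⟨N - 2, by have := NeZero.ne N; omega⟩
  have hcast : Bijective fun t : Fin (k + 2) ↦ ((t : ℕ) : ZMod (k + 2)) := by
    refine (Fintype.bijective_iff_injective_and_card _).2 ⟨fun s t hst ↦ Fin.ext ?_, by simp⟩
    simpa only [ZMod.val_cast_of_lt s.isLt, ZMod.val_cast_of_lt t.isLt] using
      congrArg ZMod.val hst
  simpa using hasHamiltonianPathStartingWith_of_bijective (G := G)
    (fun t ↦ σ (i + ((t : ℕ) : ZMod (k + 2))))
    (hσ.comp ((Equiv.addLeft i).bijective.comp hcast))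
    (fun t _ ↦ by simpa [add_assoc] using hadj (i + t))

theorem hasHamiltonianPathStartingWith_of_numbering {N : ℕ} [NeZero N] (pos : V → ZMod N)
    (hpos : Bijective pos) (hsucc : ∀ v, ∃ w, G.Adj v w ∧ pos w = pos v + 1) {u v : V}
    (huv : pos v = pos u + 1 ∨ pos u = pos v + 1) : G.HasHamiltonianPathStartingWith u v := by
  let σ := (Equiv.ofBijective pos hpos).symm
  have hσ (x : V) : σ (pos x) = x := σ.apply_symm_apply x
  have hadj (i : ZMod N) : G.Adj (σ i) (σ (i + 1)) := by
    obtain ⟨w, hw, hpw⟩ := hsucc (σ i)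
    rwa [show i + 1 = pos w by rw [hpw]; exact congrArg (· + 1) (σ.symm_apply_apply i).symm, hσ]
  rcases huv with huv | huv
  · simpa [hσ, ← huv] using
      hasHamiltonianPathStartingWith_of_bijective_zmod σ σ.bijective hadj (pos u)
  · have hadj' (i : ZMod N) : G.Adj (σ (-i)) (σ (-(i + 1))) := by
      simpa using (hadj (-(i + 1))).symm
    have h := hasHamiltonianPathStartingWith_of_bijective_zmod (σ ∘ Neg.neg)
      (σ.bijective.comp neg_bijective) hadj' (-pos u)
    rwa [comp_apply, comp_apply, neg_neg, hσ, show -(-pos u + 1) = pos v by rw [huv]; ring, hσ] at h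

end SimpleGraph

open SimpleGraph

section Grid

variable {m : ℕ}

theorem gridGraph_adj {c c' : Fin m × Fin m} :
    (gridGraph m).Adj c c' ↔ ((c.1 : ℤ) - c'.1).natAbs + ((c.2 : ℤ) - c'.2).natAbs = 1 :=
  Iff.rfl

def gridReflect (m : ℕ) : gridGraph m ≃g gridGraph m where
  toEquiv := (Equiv.refl _).prodCongr Fin.revPerm
  map_rel_iff' {a b} := by
    simp only [gridGraph_adj, Equiv.prodCongr_apply, Prod.map, Equiv.refl_apply,
      Fin.revPerm_apply, Fin.val_rev]
    omega

def gridTranspose (m : ℕ) : gridGraph m ≃g gridGraph m where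
  toEquiv := Equiv.prodComm _ _
  map_rel_iff' {a b} := by
    simp only [gridGraph_adj, Equiv.prodComm_apply, Prod.fst_swap, Prod.snd_swap]
    omega

/-- Position of a cell on the snake: row `0` fills positions `0, …, m - 1`; for `i ≥ 1`, row `i`
without its first cell fills `(m - 1) i + 1, …, (m - 1) i + (m - 1)`, leftwards when `i` is odd;
column `0` is climbed back in the last `m - 1` positions. -/
def snakeIndex (c : Fin m × Fin m) : ℕ :=
  if (c.2 : ℕ) = 0 ∧ (c.1 : ℕ) ≠ 0 then m * m - c.1
  else if (c.1 : ℕ) % 2 = 1 then (m - 1) * c.1 + (m - c.2) else (m - 1) * c.1 + c.2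

private theorem mul_self_eq (hm : 0 < m) : m * m = (m - 1) * (m - 1) + 2 * (m - 1) + 1 := by
  obtain ⟨k, rfl⟩ := Nat.exists_eq_add_of_lt hm
  simp only [zero_add, Nat.add_sub_cancel]
  ring

theorem exists_snakeIndex_eq {t : ℕ} (ht : t < m * m) :
    ∃ c : Fin m × Fin m, snakeIndex c = t := by
  have hm0 : 0 < m := Nat.pos_of_mul_pos_left (by omega : 0 < m * m)
  have hm := Nat.sub_one_mul m m
  by_cases hrow0 : t < m
  · exact ⟨(⟨0, hm0⟩, ⟨t, hrow0⟩), by simp [snakeIndex]⟩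
  by_cases hcol0 : m * m - m < t
  · refine ⟨(⟨m * m - t, by omega⟩, ⟨0, hm0⟩), ?_⟩
    simp only [snakeIndex]
    rw [if_pos (by simp; omega)]
    omega
  have hm2 : 2 ≤ m := by
    by_contra h
    interval_cases m
    omega
  set q := (t - 1) / (m - 1)
  set r := (t - 1) % (m - 1)
  have hqr : (m - 1) * q + r = t - 1 := Nat.div_add_mod _ _
  have hr : r < m - 1 := Nat.mod_lt _ (by omega)
  have hq : q < m := Nat.lt_of_mul_lt_mul_left (a := m - 1) (by omega)
  have hq1 : 1 ≤ q := by
    by_contra h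
    simp only [not_le, Nat.lt_one_iff] at h
    simp only [h, mul_zero] at hqr
    omega
  by_cases hodd : q % 2 = 1
  · refine ⟨(⟨q, hq⟩, ⟨m - 1 - r, by omega⟩), ?_⟩
    simp only [snakeIndex]
    rw [if_neg (by simp; omega), if_pos hodd]
    omega
  · refine ⟨(⟨q, hq⟩, ⟨r + 1, by omega⟩), ?_⟩
    simp only [snakeIndex]
    rw [if_neg (by simp), if_neg hodd]
    omega

theorem exists_adj_snakeIndex_succ (hm : Even m) (c : Fin m × Fin m) :
    ∃ c', (gridGraph m).Adj c c' ∧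
      (snakeIndex c' = snakeIndex c + 1 ∨ snakeIndex c' + m * m = snakeIndex c + 1) := by
  obtain ⟨⟨i, hi⟩, ⟨j, hj⟩⟩ := c
  have hsq := mul_self_eq (m := m) (by omega)
  have hsucc := mul_add_one (m - 1) i
  have hmeven := Nat.even_iff.1 hm
  by_cases hcol0 : j = 0 ∧ i ≠ 0
  · have hwrap : i = 1 → (m - 1) * (i - 1) = 0 := by rintro rfl; simp
    refine ⟨(⟨i - 1, by omega⟩, ⟨0, by omega⟩), ?_⟩
    simp only [gridGraph_adj, snakeIndex, true_and]
    repeat' split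
    all_goals omega
  by_cases hodd : i % 2 = 1
  · rcases (by omega : 2 ≤ j ∨ j = 1 ∧ i + 1 < m ∨ j = 1 ∧ i + 1 = m) with h | h | ⟨rfl, h⟩
    · refine ⟨(⟨i, hi⟩, ⟨j - 1, by omega⟩), ?_⟩
      simp only [gridGraph_adj, snakeIndex]
      repeat' split
      all_goals omega
    · refine ⟨(⟨i + 1, by omega⟩, ⟨j, hj⟩), ?_⟩
      simp only [gridGraph_adj, snakeIndex]
      repeat' split
      all_goals omega
    · obtain rfl : i = m - 1 := by omega
      refine ⟨(⟨m - 1, hi⟩, ⟨0, by omega⟩), ?_⟩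
      simp only [gridGraph_adj, snakeIndex]
      repeat' split
      all_goals omega
  · rcases (by omega : j + 1 < m ∨ j + 1 = m ∧ i + 1 < m) with h | h
    · refine ⟨(⟨i, hi⟩, ⟨j + 1, h⟩), ?_⟩
      simp only [gridGraph_adj, snakeIndex]
      repeat' split
      all_goals omega
    · refine ⟨(⟨i + 1, h.2⟩, ⟨j, hj⟩), ?_⟩
      simp only [gridGraph_adj, snakeIndex]
      repeat' split
      all_goals omega

theorem snakeIndex_horizontal (hm : Even m) {c c' : Fin m × Fin m} (hrow : (c.1 : ℕ) = c'.1)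
    (hcol : (c.2 : ℕ) + 1 = c'.2) (hend : (c.2 : ℕ) = 0 → (c.1 : ℕ) = 0 ∨ (c.1 : ℕ) + 1 = m) :
    snakeIndex c' = snakeIndex c + 1 ∨ snakeIndex c = snakeIndex c' + 1 := by
  obtain ⟨⟨i, hi⟩, ⟨j, hj⟩⟩ := c
  obtain ⟨⟨i', hi'⟩, ⟨j', hj'⟩⟩ := c'
  simp only at hrow hcol hend
  subst hrow hcol
  have hsq := mul_self_eq (m := m) (by omega)
  have hmeven := Nat.even_iff.1 hm
  by_cases hlast : j = 0 ∧ i + 1 = m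
  · obtain rfl : i = m - 1 := by omega
    simp only [snakeIndex]
    repeat' split
    all_goals omega
  · simp only [snakeIndex]
    repeat' split
    all_goals omega

def snakePos (m : ℕ) (c : Fin m × Fin m) : ZMod (m * m) :=
  snakeIndex c

theorem snakePos_bijective [NeZero m] : Bijective (snakePos m) := by
  refine (Fintype.bijective_iff_surjective_and_card _).2 ⟨fun x ↦ ?_, by simp⟩
  obtain ⟨c, hc⟩ := exists_snakeIndex_eq (ZMod.val_lt x)
  exact ⟨c, by simp [snakePos, hc]⟩

theorem exists_adj_snakePos_succ (hm : Even m) (c : Fin m × Fin m) :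
    ∃ c', (gridGraph m).Adj c c' ∧ snakePos m c' = snakePos m c + 1 := by
  obtain ⟨c', hadj, h | h⟩ := exists_adj_snakeIndex_succ hm c
  · exact ⟨c', hadj, by simp [snakePos, h]⟩
  · refine ⟨c', hadj, ?_⟩
    have h := congrArg (Nat.cast : ℕ → ZMod (m * m)) h
    simpa only [snakePos, Nat.cast_add, ZMod.natCast_self, add_zero, Nat.cast_one] using h

theorem gridGraph_hasHamiltonianPathStartingWith_of_snakeIndex (hm : Even m)
    {c c' : Fin m × Fin m}
    (h : snakeIndex c' = snakeIndex c + 1 ∨ snakeIndex c = snakeIndex c' + 1) :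
    (gridGraph m).HasHamiltonianPathStartingWith c c' := by
  have : NeZero m := ⟨c.1.pos.ne'⟩
  refine hasHamiltonianPathStartingWith_of_numbering (snakePos m) snakePos_bijective
    (exists_adj_snakePos_succ hm) ?_
  rcases h with h | h
  · exact Or.inl (by simp [snakePos, h])
  · exact Or.inr (by simp [snakePos, h])

theorem gridGraph_hasHamiltonianPathStartingWith_horizontal (hm : Even m)
    {c c' : Fin m × Fin m} (hrow : (c.1 : ℕ) = c'.1) (hcol : (c.2 : ℕ) + 1 = c'.2) :
    (gridGraph m).HasHamiltonianPathStartingWith c c' ∧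
      (gridGraph m).HasHamiltonianPathStartingWith c' c := by
  by_cases hend : (c.2 : ℕ) = 0 → (c.1 : ℕ) = 0 ∨ (c.1 : ℕ) + 1 = m
  · have h := snakeIndex_horizontal hm hrow hcol hend
    exact ⟨gridGraph_hasHamiltonianPathStartingWith_of_snakeIndex hm h,
      gridGraph_hasHamiltonianPathStartingWith_of_snakeIndex hm h.symm⟩
  · have h := snakeIndex_horizontal hm (c := gridReflect m c') (c' := gridReflect m c)
      (by simpa [gridReflect] using hrow.symm) (by simp [gridReflect, Fin.val_rev]; omega)
      (by simp [gridReflect, Fin.val_rev]; omega)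
    exact ⟨(gridReflect m).hasHamiltonianPathStartingWith_iff.1
        (gridGraph_hasHamiltonianPathStartingWith_of_snakeIndex hm h.symm),
      (gridReflect m).hasHamiltonianPathStartingWith_iff.1
        (gridGraph_hasHamiltonianPathStartingWith_of_snakeIndex hm h)⟩

end Grid

theorem exists_hamiltonian_path_with_prescribed_first_step_general (n : ℕ)
    (c c' : Fin (2 * n) × Fin (2 * n)) (hadj : (gridGraph (2 * n)).Adj c c') :
    ∃ (v : Fin (2 * n) × Fin (2 * n)) (p : (gridGraph (2 * n)).Walk c v),
      p.IsHamiltonian ∧ p.getVert 1 = c' := by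
  have hm : Even (2 * n) := even_two_mul n
  show (gridGraph (2 * n)).HasHamiltonianPathStartingWith c c'
  rw [gridGraph_adj] at hadj
  rcases (by omega : ((c.1 : ℕ) = c'.1 ∧ ((c.2 : ℕ) + 1 = c'.2 ∨ (c'.2 : ℕ) + 1 = c.2)) ∨
      ((c.2 : ℕ) = c'.2 ∧ ((c.1 : ℕ) + 1 = c'.1 ∨ (c'.1 : ℕ) + 1 = c.1))) with
    ⟨hrow, hstep | hstep⟩ | ⟨hcol, hstep | hstep⟩
  · exact (gridGraph_hasHamiltonianPathStartingWith_horizontal hm hrow hstep).1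
  · exact (gridGraph_hasHamiltonianPathStartingWith_horizontal hm hrow.symm hstep).2
  · rw [← (gridTranspose _).hasHamiltonianPathStartingWith_iff]
    exact (gridGraph_hasHamiltonianPathStartingWith_horizontal hm hcol hstep).1
  · rw [← (gridTranspose _).hasHamiltonianPathStartingWith_iff]
    exact (gridGraph_hasHamiltonianPathStartingWith_horizontal hm hcol.symm hstep).2

/-- in the `2n × 2n` grid graph (`n ≥ 1`), for every cell `c` and every
cell `c'` adjacent to `c`, there is a Hamiltonian path starting at `c` whose second
vertex is `c'`. -/
theorem exists_hamiltonian_path_with_prescribed_first_step (n : ℕ) (hn : 1 ≤ n)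
    (c c' : Fin (2 * n) × Fin (2 * n)) (hadj : (gridGraph (2 * n)).Adj c c') :
    ∃ (v : Fin (2 * n) × Fin (2 * n)) (p : (gridGraph (2 * n)).Walk c v),
      p.IsHamiltonian ∧ p.getVert 1 = c' :=
  exists_hamiltonian_path_with_prescribed_first_step_general n c c' hadj
end

section
/- Let n ≥ 1. In the (2n+1)×(2n+1) grid graph there exists a Hamiltonian path from the corner cell (0,0) to the opposite corner cell (2n,2n); in particular a straight, non-overlapping walk started at one corner can cover all (2n+1)² cells, ending at the diagonally opposite corner, with length (2n+1)² − 1. -/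
/-!
Traverse the grid row by row, reversing the direction on every other row (a boustrophedon).
Consecutive cells of this enumeration are adjacent, and since the number of rows is odd the
last row is traversed in the same direction as the first, so the walk ends in the opposite corner.
-/

namespace SimpleGraph.Walk

variable {V : Type*} [DecidableEq V] {G : SimpleGraph V}

theorem isHamiltonian_copy {u v u' v' : V} (p : G.Walk u v) (hu : u = u') (hv : v = v') :
    (p.copy hu hv).IsHamiltonian ↔ p.IsHamiltonian := by
  subst hu hv
  rfl

theorem exists_isHamiltonian_of_equiv {n : ℕ} (e : Fin n ≃ V)
    (he : ∀ i (hi : i + 1 < n), G.Adj (e ⟨i, by omega⟩) (e ⟨i + 1, hi⟩)) (hn : 0 < n) :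
    ∃ p : G.Walk (e ⟨0, hn⟩) (e ⟨n - 1, by omega⟩), p.IsHamiltonian := by
  have hne : List.ofFn e ≠ [] := by simp; omega
  let p := ofSupport (List.ofFn e) hne (List.isChain_ofFn.mpr he)
  have hsupp : p.support = List.ofFn e := support_ofSupport hne _
  have hp : p.IsHamiltonian := by
    refine IsPath.isHamiltonian_of_mem ?_ fun v => ?_
    · exact (isPath_def _).mpr (by rw [hsupp]; exact List.nodup_ofFn.mpr e.injective)
    · rw [hsupp]; exact List.mem_ofFn.mpr (e.surjective v)
  exact ⟨p.copy (List.head_ofFn hne) (List.getLast_ofFn hne), (isHamiltonian_copy ..).mpr hp⟩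

end SimpleGraph.Walk

theorem Nat.add_one_div_mod_cases (m k : ℕ) :
    ((k + 1) / m = k / m ∧ (k + 1) % m = k % m + 1) ∨
      ((k + 1) / m = k / m + 1 ∧ (k + 1) % m = 0 ∧ k % m + 1 = m) := by
  rcases Nat.eq_zero_or_pos m with rfl | hm
  · simp
  have hk := Nat.div_add_mod k m
  have hlt := Nat.mod_lt k hm
  by_cases hrow : k % m + 1 < m
  · exact .inl ((Nat.div_mod_unique hm).mpr ⟨by omega, hrow⟩)
  · have := (Nat.div_mod_unique hm (a := k + 1) (d := k / m + 1) (c := 0)).mpr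
      ⟨by rw [Nat.mul_add]; omega, hm⟩
    exact .inr ⟨this.1, this.2, by omega⟩

def gridSnake (m : ℕ) : Fin (m * m) ≃ Fin m × Fin m :=
  finProdFinEquiv.symm.trans <| Equiv.prodShear (Equiv.refl _) fun i =>
    if (i : ℕ) % 2 = 0 then Equiv.refl _ else Fin.revPerm

theorem gridSnake_fst_val {m : ℕ} (k : Fin (m * m)) : ((gridSnake m k).1 : ℕ) = k / m := by
  simp [gridSnake]

theorem gridSnake_snd_val {m : ℕ} (k : Fin (m * m)) :
    ((gridSnake m k).2 : ℕ) = if k / m % 2 = 0 then k % m else m - 1 - k % m := by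
  simp only [gridSnake, Equiv.trans_apply, finProdFinEquiv_symm_apply, Equiv.prodShear_apply]
  rw [← Fin.coe_divNat]
  split_ifs <;> simp [Fin.val_rev]; omega

theorem gridGraph_adj_gridSnake {m k : ℕ} (hk : k + 1 < m * m) :
    (gridGraph m).Adj (gridSnake m ⟨k, by omega⟩) (gridSnake m ⟨k + 1, hk⟩) := by
  show (_ : ℤ).natAbs + (_ : ℤ).natAbs = 1
  simp only [gridSnake_fst_val, gridSnake_snd_val]
  have hm : 0 < m := by grind
  have hr := Nat.mod_lt k hm
  have hr₁ := Nat.mod_lt (k + 1) hm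
  rcases Nat.add_one_div_mod_cases m k with ⟨hq', hr'⟩ | ⟨hq', hr', hlast⟩ <;>
  · rw [hq', hr']
    -- `omega` cannot use facts about division by the variable `m`
    generalize k / m = q, k % m = r at *
    split_ifs <;> omega

theorem gridSnake_zero {m : ℕ} (hm : 0 < m) :
    gridSnake m ⟨0, Nat.mul_pos hm hm⟩ = (⟨0, hm⟩, ⟨0, hm⟩) := by
  ext <;> simp [gridSnake_fst_val, gridSnake_snd_val]

theorem gridSnake_last_of_odd {m : ℕ} (hm : Odd m) :
    gridSnake m ⟨m * m - 1, Nat.sub_one_lt (Nat.mul_pos hm.pos hm.pos).ne'⟩ =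
      (⟨m - 1, by grind⟩, ⟨m - 1, by grind⟩) := by
  have hlast : (m * m - 1) / m = m - 1 ∧ (m * m - 1) % m = m - 1 :=
    (Nat.div_mod_unique hm.pos).mpr
      ⟨by rw [Nat.mul_sub_one]; have := Nat.le_mul_self m; grind, by grind⟩
  have heven : (m - 1) % 2 = 0 := by grind
  ext <;> simp [gridSnake_fst_val, gridSnake_snd_val, hlast, heven]

/-- in the `(2n+1) × (2n+1)` grid graph (`n ≥ 1`) there is a Hamiltonian
path from the corner `(0,0)` to the opposite corner `(2n,2n)`. -/
theorem exists_hamiltonian_path_corner_to_corner_odd (n : ℕ) :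
    ∃ p : (gridGraph (2 * n + 1)).Walk
      (⟨0, by omega⟩, ⟨0, by omega⟩) (⟨2 * n, by omega⟩, ⟨2 * n, by omega⟩),
      p.IsHamiltonian := by
  have hm : 0 < 2 * n + 1 := by omega
  obtain ⟨p, hp⟩ := SimpleGraph.Walk.exists_isHamiltonian_of_equiv (gridSnake (2 * n + 1))
    (fun _ hk => gridGraph_adj_gridSnake hk) (Nat.mul_pos hm hm)
  exact ⟨p.copy (gridSnake_zero hm) (gridSnake_last_of_odd (odd_two_mul_add_one n)),
    (SimpleGraph.Walk.isHamiltonian_copy ..).mpr hp⟩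
end

section
/- Let n > 1. Let c = (i,j) and c' = (i',j') be adjacent cells of the 2n×2n grid graph, neither of which is a corner cell (a corner cell is one of (0,0), (0,2n−1), (2n−1,0), (2n−1,2n−1)). Then there exists a Hamiltonian path from c to c', i.e., a straight, non-overlapping walk of maximum length (2n)² − 1 connecting the two adjacent cells. -/
namespace List

variable {α β : Type*}

theorem pair_infix_of_getElem? {l : List α} {i : ℕ} {a b : α}
    (ha : l[i]? = some a) (hb : l[i + 1]? = some b) : [a, b] <:+: l := by
  obtain ⟨hi, rfl⟩ := getElem?_eq_some_iff.mp ha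
  obtain ⟨hi', rfl⟩ := getElem?_eq_some_iff.mp hb
  refine ⟨l.take i, l.drop (i + 2), ?_⟩
  conv_rhs => rw [← take_append_drop i l, drop_eq_getElem_cons hi, drop_eq_getElem_cons hi']
  simp

theorem head?_flatMap_of_ne_nil {l : List α} {f : α → List β} (hf : ∀ a, f a ≠ []) :
    (l.flatMap f).head? = l.head?.bind fun a => (f a).head? := by
  cases l with
  | nil => rfl
  | cons a l => rw [flatMap_cons, head?_append_of_ne_nil _ (hf a)]; rfl

theorem getLast?_flatMap_of_ne_nil {l : List α} {f : α → List β} (hf : ∀ a, f a ≠ []) :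
    (l.flatMap f).getLast? = l.getLast?.bind fun a => (f a).getLast? := by
  rw [← head?_reverse, reverse_flatMap, head?_flatMap_of_ne_nil (by simpa using hf),
    head?_reverse]
  simp [head?_reverse]

theorem getElem?_finRange_eq_some_iff {m i : ℕ} {j : Fin m} :
    (finRange m)[i]? = some j ↔ j.val = i := by
  rw [getElem?_eq_some_iff]
  simp only [length_finRange, getElem_finRange, Fin.ext_iff, Fin.val_cast]
  exact ⟨fun ⟨_, h⟩ => h.symm, fun h => ⟨h ▸ j.isLt, h.symm⟩⟩

theorem isChain_finRange (m : ℕ) : (finRange m).IsChain fun a b => a.val + 1 = b.val := by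
  refine (isChain_map Fin.val (R := fun a b : ℕ => a + 1 = b)).mp ?_
  rw [map_coe_finRange_eq_range, isChain_range]
  exact fun _ _ => rfl

theorem head?_finRange {m : ℕ} : ∀ i ∈ (finRange m).head?, i.val = 0 := by
  intro i hi
  rwa [head?_eq_getElem?, Option.mem_def, getElem?_finRange_eq_some_iff] at hi

theorem getLast?_finRange {m : ℕ} : ∀ i ∈ (finRange m).getLast?, i.val = m - 1 := by
  intro i hi
  rwa [getLast?_eq_getElem?, Option.mem_def, getElem?_finRange_eq_some_iff,
    length_finRange] at hi

end List

theorem Cycle.chain_coe_iff {α : Type*} {r : α → α → Prop} {l : List α} :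
    (l : Cycle α).Chain r ↔ l.IsChain r ∧ ∀ x ∈ l.getLast?, ∀ y ∈ l.head?, r x y := by
  cases l with
  | nil => simp
  | cons a l =>
    rw [Cycle.chain_coe_cons, ← List.cons_append, List.isChain_append]
    simp

namespace SimpleGraph

variable {V : Type*} [DecidableEq V] {G : SimpleGraph V} {u v : V}

theorem Walk.IsHamiltonian.reverse {p : G.Walk u v} (hp : p.IsHamiltonian) :
    p.reverse.IsHamiltonian := fun w => by
  rw [Walk.support_reverse, List.count_reverse]
  exact hp w

theorem exists_isHamiltonian_comm :
    (∃ p : G.Walk u v, p.IsHamiltonian) ↔ ∃ p : G.Walk v u, p.IsHamiltonian :=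
  ⟨fun ⟨p, hp⟩ => ⟨p.reverse, hp.reverse⟩, fun ⟨p, hp⟩ => ⟨p.reverse, hp.reverse⟩⟩

theorem exists_isHamiltonian_of_isChain {l : List V}
    (hchain : (u :: l ++ [v]).IsChain G.Adj) (hnodup : (u :: l ++ [v]).Nodup)
    (hmem : ∀ w, w ∈ u :: l ++ [v]) :
    ∃ p : G.Walk u v, p.IsHamiltonian := by
  have hne : u :: l ++ [v] ≠ [] := by simp
  have hhead : (u :: l ++ [v]).head hne = u := by simp
  have hlast : (u :: l ++ [v]).getLast hne = v := by simp
  refine ⟨(Walk.ofSupport _ hne hchain).copy hhead hlast, fun w => ?_⟩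
  rw [Walk.support_copy, Walk.support_ofSupport]
  exact List.count_eq_one_of_mem hnodup (hmem w)

theorem exists_isHamiltonian_of_pair_infix_cycle {l : List V}
    (hchain : (l : Cycle V).Chain G.Adj) (hnodup : l.Nodup) (hmem : ∀ w, w ∈ l)
    (huv : [u, v] <:+: l) :
    ∃ p : G.Walk u v, p.IsHamiltonian := by
  obtain ⟨s, t, rfl⟩ := huv
  have hrot : ((s ++ [u, v] ++ t : List V) : Cycle V) = ↑(u :: (v :: (t ++ s))) := by
    rw [Cycle.coe_eq_coe]
    simpa using (List.isRotated_append (l := s) (l' := u :: v :: t))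
  rw [hrot, Cycle.chain_coe_cons] at hchain
  have hperm : (u :: (t ++ s).reverse ++ [v]).Perm (s ++ [u, v] ++ t) := by
    simp only [List.perm_iff_count, List.count_append, List.count_cons, List.count_reverse,
      List.count_nil]
    omega
  refine exists_isHamiltonian_of_isChain ?_ (hperm.nodup_iff.mpr hnodup)
    fun w => hperm.mem_iff.mpr (hmem w)
  have := List.isChain_reverse.mpr (hchain.tail.imp fun _ _ h => G.adj_symm h)
  simpa using this

theorem Iso.exists_isHamiltonian {W : Type*} [DecidableEq W] {H : SimpleGraph W} (φ : G ≃g H)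
    (h : ∃ p : G.Walk u v, p.IsHamiltonian) : ∃ p : H.Walk (φ u) (φ v), p.IsHamiltonian := by
  obtain ⟨p, hp⟩ := h
  exact ⟨p.map φ.toHom, hp.map _ φ.bijective⟩

end SimpleGraph

namespace gridGraph

open SimpleGraph

variable {m : ℕ}

theorem adj_iff {c c' : Fin m × Fin m} : (gridGraph m).Adj c c' ↔
    c.1 = c'.1 ∧ (c.2.val + 1 = c'.2.val ∨ c'.2.val + 1 = c.2.val) ∨
      c.2 = c'.2 ∧ (c.1.val + 1 = c'.1.val ∨ c'.1.val + 1 = c.1.val) := by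
  simp only [gridGraph, Fin.ext_iff]
  omega

def transpose : gridGraph m ≃g gridGraph m where
  toEquiv := Equiv.prodComm _ _
  map_rel_iff' := by
    intro c c'
    simp only [Equiv.prodComm_apply, adj_iff, Prod.fst_swap, Prod.snd_swap]
    tauto

def reflectCols : gridGraph m ≃g gridGraph m where
  toEquiv := (Equiv.refl _).prodCongr Fin.revPerm
  map_rel_iff' := by
    intro c c'
    simp only [Equiv.prodCongr_apply, Equiv.coe_refl, Prod.map_fst, Prod.map_snd, id,
      Fin.revPerm_apply, adj_iff, Fin.val_rev, Fin.rev_inj]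
    omega

theorem reflectCols_apply (c : Fin m × Fin m) : reflectCols c = (c.1, c.2.rev) := rfl

def nonzeroCols (m : ℕ) : List (Fin m) := (List.finRange m).tail

theorem getElem?_nonzeroCols_eq_some_iff {i : ℕ} {j : Fin m} :
    (nonzeroCols m)[i]? = some j ↔ j.val = i + 1 := by
  rw [nonzeroCols, List.getElem?_tail, List.getElem?_finRange_eq_some_iff]

theorem mem_nonzeroCols {j : Fin m} : j ∈ nonzeroCols m ↔ j.val ≠ 0 := by
  simp only [List.mem_iff_getElem?, getElem?_nonzeroCols_eq_some_iff]
  exact ⟨fun ⟨i, h⟩ => by omega, fun h => ⟨j.val - 1, by omega⟩⟩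

theorem nonzeroCols_ne_nil (hm : 2 ≤ m) : nonzeroCols m ≠ [] :=
  List.ne_nil_of_mem (mem_nonzeroCols (j := ⟨1, hm⟩) |>.mpr one_ne_zero)

theorem nodup_nonzeroCols : (nonzeroCols m).Nodup :=
  (List.nodup_finRange m).sublist (List.tail_sublist _)

theorem isChain_nonzeroCols : (nonzeroCols m).IsChain fun a b => a.val + 1 = b.val :=
  (List.isChain_finRange m).tail

theorem head?_nonzeroCols : ∀ j ∈ (nonzeroCols m).head?, j.val = 1 := by
  intro j hj
  rwa [List.head?_eq_getElem?, Option.mem_def, getElem?_nonzeroCols_eq_some_iff] at hj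

theorem getLast?_nonzeroCols : ∀ j ∈ (nonzeroCols m).getLast?, j.val = m - 1 := by
  intro j hj
  rw [List.getLast?_eq_getElem?, Option.mem_def, getElem?_nonzeroCols_eq_some_iff] at hj
  simp only [nonzeroCols, List.length_tail, List.length_finRange] at hj
  omega

theorem pair_infix_nonzeroCols {a b : Fin m} (ha : a.val ≠ 0) (hab : a.val + 1 = b.val) :
    [a, b] <:+: nonzeroCols m :=
  List.pair_infix_of_getElem? (i := a.val - 1)
    (getElem?_nonzeroCols_eq_some_iff.mpr (by omega))
    (getElem?_nonzeroCols_eq_some_iff.mpr (by omega))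

def snakeRow (i : Fin m) : List (Fin m × Fin m) :=
  (if Even i.val then nonzeroCols m else (nonzeroCols m).reverse).map (i, ·)

theorem mem_snakeRow {i : Fin m} {c : Fin m × Fin m} :
    c ∈ snakeRow i ↔ c.1 = i ∧ c.2.val ≠ 0 := by
  obtain ⟨a, b⟩ := c
  unfold snakeRow
  split_ifs <;> simp [mem_nonzeroCols, eq_comm, and_comm]

theorem snakeRow_ne_nil (hm : 2 ≤ m) (i : Fin m) : snakeRow i ≠ [] := by
  unfold snakeRow
  split_ifs <;> simpa using nonzeroCols_ne_nil hm

theorem nodup_snakeRow (i : Fin m) : (snakeRow i).Nodup := by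
  unfold snakeRow
  split_ifs <;> refine List.Nodup.map (fun _ _ h => (Prod.mk.inj h).2) ?_
  exacts [nodup_nonzeroCols, List.nodup_reverse.mpr nodup_nonzeroCols]

theorem isChain_snakeRow (i : Fin m) : (snakeRow i).IsChain (gridGraph m).Adj := by
  unfold snakeRow
  split_ifs <;> rw [List.isChain_map]
  · exact isChain_nonzeroCols.imp fun _ _ h => adj_iff.mpr (Or.inl ⟨rfl, Or.inl h⟩)
  · exact List.isChain_reverse.mpr
      (isChain_nonzeroCols.imp fun _ _ h => adj_iff.mpr (Or.inl ⟨rfl, Or.inr h⟩))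

theorem head?_snakeRow (i : Fin m) :
    ∀ c ∈ (snakeRow i).head?, c.1 = i ∧ c.2.val = if Even i.val then 1 else m - 1 := by
  unfold snakeRow
  split_ifs <;> simp only [List.head?_map, List.head?_reverse, Option.mem_def,
    Option.map_eq_some_iff, forall_exists_index, and_imp]
  all_goals rintro _ j hj rfl
  exacts [⟨rfl, head?_nonzeroCols j hj⟩, ⟨rfl, getLast?_nonzeroCols j hj⟩]

theorem getLast?_snakeRow (i : Fin m) :
    ∀ c ∈ (snakeRow i).getLast?, c.1 = i ∧ c.2.val = if Even i.val then m - 1 else 1 := by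
  unfold snakeRow
  split_ifs <;> simp only [List.getLast?_map, List.getLast?_reverse, Option.mem_def,
    Option.map_eq_some_iff, forall_exists_index, and_imp]
  all_goals rintro _ j hj rfl
  exacts [⟨rfl, getLast?_nonzeroCols j hj⟩, ⟨rfl, head?_nonzeroCols j hj⟩]

theorem pair_infix_snakeRow (i : Fin m) {j j' : Fin m} (hj : j.val ≠ 0)
    (hjj' : j.val + 1 = j'.val) :
    [(i, j), (i, j')] <:+: snakeRow i ∨ [(i, j'), (i, j)] <:+: snakeRow i := by
  have h := pair_infix_nonzeroCols hj hjj'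
  unfold snakeRow
  split_ifs
  · exact Or.inl (h.map (i, ·))
  · exact Or.inr (h.reverse.map (i, ·))

theorem getLast?_snakeRow_adj_head?_snakeRow {a b : Fin m} (hab : a.val + 1 = b.val) :
    ∀ x ∈ (snakeRow a).getLast?, ∀ y ∈ (snakeRow b).head?, (gridGraph m).Adj x y := by
  intro x hx y hy
  obtain ⟨hx1, hx2⟩ := getLast?_snakeRow a x hx
  obtain ⟨hy1, hy2⟩ := head?_snakeRow b y hy
  have hparity : Even b.val ↔ ¬Even a.val := by rw [← hab, Nat.even_add_one]
  refine adj_iff.mpr (Or.inr ⟨Fin.ext ?_, Or.inl (by rw [hx1, hy1]; exact hab)⟩)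
  by_cases ha : Even a.val <;> simp only [ha, hparity, if_true, if_false, not_true,
    not_false_eq_true] at hx2 hy2 <;> omega

def snakeRows (m : ℕ) : List (Fin m × Fin m) := (List.finRange m).flatMap snakeRow

theorem isChain_snakeRows (hm : 2 ≤ m) : (snakeRows m).IsChain (gridGraph m).Adj := by
  rw [snakeRows, List.flatMap_def, List.isChain_flatten (by simpa using snakeRow_ne_nil hm)]
  refine ⟨by simpa using isChain_snakeRow, ?_⟩
  rw [List.isChain_map]
  exact (List.isChain_finRange m).imp fun _ _ => getLast?_snakeRow_adj_head?_snakeRow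

theorem head?_snakeRows (hm : 2 ≤ m) :
    ∀ c ∈ (snakeRows m).head?, c.1.val = 0 ∧ c.2.val = 1 := by
  intro c hc
  rw [snakeRows, List.head?_flatMap_of_ne_nil (snakeRow_ne_nil hm), Option.mem_def,
    Option.bind_eq_some_iff] at hc
  obtain ⟨i, hi, hc⟩ := hc
  have hi0 := List.head?_finRange i hi
  obtain ⟨rfl, h2⟩ := head?_snakeRow i c hc
  rw [hi0, if_pos Even.zero] at h2
  exact ⟨hi0, h2⟩

theorem getLast?_snakeRows (hm : 2 ≤ m) (heven : Even m) :
    ∀ c ∈ (snakeRows m).getLast?, c.1.val = m - 1 ∧ c.2.val = 1 := by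
  intro c hc
  rw [snakeRows, List.getLast?_flatMap_of_ne_nil (snakeRow_ne_nil hm), Option.mem_def,
    Option.bind_eq_some_iff] at hc
  obtain ⟨i, hi, hc⟩ := hc
  have hi0 := List.getLast?_finRange i hi
  obtain ⟨rfl, h2⟩ := getLast?_snakeRow i c hc
  have hodd : ¬Even (m - 1) := by
    rw [← Nat.even_add_one, Nat.sub_add_cancel (by omega)]
    exact heven
  rw [hi0, if_neg hodd] at h2
  exact ⟨hi0, h2⟩

section

variable [NeZero m]

def snakeColumn (m : ℕ) [NeZero m] : List (Fin m × Fin m) :=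
  (List.finRange m).reverse.map (·, 0)

theorem isChain_snakeColumn : (snakeColumn m).IsChain (gridGraph m).Adj := by
  rw [snakeColumn, List.isChain_map, List.isChain_reverse]
  exact (List.isChain_finRange m).imp fun _ _ h => adj_iff.mpr (Or.inr ⟨rfl, Or.inr h⟩)

theorem head?_snakeColumn :
    ∀ c ∈ (snakeColumn m).head?, c.1.val = m - 1 ∧ c.2.val = 0 := by
  simp only [snakeColumn, List.head?_map, List.head?_reverse, Option.mem_def,
    Option.map_eq_some_iff, forall_exists_index, and_imp]
  rintro _ i hi rfl
  exact ⟨List.getLast?_finRange i hi, rfl⟩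

theorem getLast?_snakeColumn : ∀ c ∈ (snakeColumn m).getLast?, c.1.val = 0 ∧ c.2.val = 0 := by
  simp only [snakeColumn, List.getLast?_map, List.getLast?_reverse, Option.mem_def,
    Option.map_eq_some_iff, forall_exists_index, and_imp]
  rintro _ i hi rfl
  exact ⟨List.head?_finRange i hi, rfl⟩

def snake (m : ℕ) [NeZero m] : List (Fin m × Fin m) := snakeRows m ++ snakeColumn m

theorem mem_snake (c : Fin m × Fin m) : c ∈ snake m := by
  rw [snake, snakeRows, snakeColumn, List.mem_append, List.mem_flatMap, List.mem_map]
  by_cases hc : c.2.val = 0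
  · exact Or.inr ⟨c.1, List.mem_reverse.mpr (List.mem_finRange _),
      Prod.ext rfl (Fin.ext hc.symm)⟩
  · exact Or.inl ⟨c.1, List.mem_finRange _, mem_snakeRow.mpr ⟨rfl, hc⟩⟩

theorem nodup_snake : (snake m).Nodup := by
  rw [snake, snakeRows, snakeColumn, List.nodup_append]
  refine ⟨List.nodup_flatMap.mpr ⟨fun i _ => nodup_snakeRow i, ?_⟩,
    (List.nodup_reverse.mpr (List.nodup_finRange m)).map fun _ _ h => (Prod.mk.inj h).1, ?_⟩
  · refine (List.nodup_finRange m).imp fun hne c hc hc' => ?_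
    exact hne ((mem_snakeRow.mp hc).1.symm.trans (mem_snakeRow.mp hc').1)
  · simp only [List.mem_flatMap, List.mem_map]
    rintro c ⟨i, -, hc⟩ _ ⟨j, -, rfl⟩ rfl
    exact (mem_snakeRow.mp hc).2 rfl

theorem chain_snake (heven : Even m) :
    (snake m : Cycle (Fin m × Fin m)).Chain (gridGraph m).Adj := by
  have hm : 2 ≤ m := by
    obtain ⟨k, hk⟩ := heven
    have := NeZero.ne m
    omega
  have hrows : snakeRows m ≠ [] := List.ne_nil_of_mem (a := (0, ⟨1, hm⟩))
    (List.mem_flatMap.mpr ⟨0, List.mem_finRange _, mem_snakeRow.mpr ⟨rfl, one_ne_zero⟩⟩)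
  have hcol : snakeColumn m ≠ [] := by simp [snakeColumn, NeZero.ne]
  rw [Cycle.chain_coe_iff, snake, List.isChain_append, List.getLast?_append_of_ne_nil _ hcol,
    List.head?_append_of_ne_nil _ hrows]
  refine ⟨⟨isChain_snakeRows hm, isChain_snakeColumn, fun x hx y hy => ?_⟩,
    fun x hx y hy => ?_⟩
  · obtain ⟨hx1, hx2⟩ := getLast?_snakeRows hm heven x hx
    obtain ⟨hy1, hy2⟩ := head?_snakeColumn y hy
    exact adj_iff.mpr (Or.inl ⟨Fin.ext (by omega), Or.inr (by omega)⟩)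
  · obtain ⟨hx1, hx2⟩ := getLast?_snakeColumn x hx
    obtain ⟨hy1, hy2⟩ := head?_snakeRows hm y hy
    exact adj_iff.mpr (Or.inl ⟨Fin.ext (by omega), Or.inl (by omega)⟩)

theorem pair_infix_snake (i : Fin m) {j j' : Fin m} (hj : j.val ≠ 0)
    (hjj' : j.val + 1 = j'.val) :
    [(i, j), (i, j')] <:+: snake m ∨ [(i, j'), (i, j)] <:+: snake m := by
  have hrow : snakeRow i <:+: snake m :=
    (List.infix_of_mem_flatten (List.mem_map_of_mem (List.mem_finRange i))).trans
      (List.prefix_append _ _).isInfix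
  exact (pair_infix_snakeRow i hj hjj').imp (·.trans hrow) (·.trans hrow)

theorem exists_isHamiltonian_of_snd_ne_zero (heven : Even m) (i : Fin m) {j j' : Fin m}
    (hj : j.val ≠ 0) (hjj' : j.val + 1 = j'.val) :
    ∃ p : (gridGraph m).Walk (i, j) (i, j'), p.IsHamiltonian := by
  rcases pair_infix_snake i hj hjj' with h | h
  · exact exists_isHamiltonian_of_pair_infix_cycle (chain_snake heven) nodup_snake mem_snake h
  · exact exists_isHamiltonian_comm.mp
      (exists_isHamiltonian_of_pair_infix_cycle (chain_snake heven) nodup_snake mem_snake h)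

end

theorem exists_isHamiltonian_of_snd_succ (heven : Even m) (hm : 3 ≤ m) (i : Fin m)
    {j j' : Fin m} (hjj' : j.val + 1 = j'.val) :
    ∃ p : (gridGraph m).Walk (i, j) (i, j'), p.IsHamiltonian := by
  have : NeZero m := ⟨by omega⟩
  by_cases hj : j.val = 0
  · have h := reflectCols.exists_isHamiltonian
      (exists_isHamiltonian_of_snd_ne_zero heven i (j := j'.rev) (j' := j.rev)
        (by simp only [Fin.val_rev]; omega) (by simp only [Fin.val_rev]; omega))
    rw [reflectCols_apply, reflectCols_apply, Fin.rev_rev, Fin.rev_rev] at h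
    exact exists_isHamiltonian_comm.mp h
  · exact exists_isHamiltonian_of_snd_ne_zero heven i hj hjj'

theorem exists_isHamiltonian_of_adj (heven : Even m) (hm : 3 ≤ m) {c c' : Fin m × Fin m}
    (h : (gridGraph m).Adj c c') : ∃ p : (gridGraph m).Walk c c', p.IsHamiltonian := by
  obtain ⟨a, b⟩ := c
  obtain ⟨a', b'⟩ := c'
  rcases adj_iff.mp h with ⟨rfl, hb | hb⟩ | ⟨rfl, ha | ha⟩
  · exact exists_isHamiltonian_of_snd_succ heven hm a hb
  · exact exists_isHamiltonian_comm.mp (exists_isHamiltonian_of_snd_succ heven hm a hb)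
  · exact transpose.exists_isHamiltonian (exists_isHamiltonian_of_snd_succ heven hm b ha)
  · exact exists_isHamiltonian_comm.mp
      (transpose.exists_isHamiltonian (exists_isHamiltonian_of_snd_succ heven hm b ha))

end gridGraph

theorem exists_hamiltonian_path_between_adjacent_noncorner_general (n : ℕ) (hn : 1 < n)
    (c c' : Fin (2 * n) × Fin (2 * n)) (hadj : (gridGraph (2 * n)).Adj c c') :
    ∃ p : (gridGraph (2 * n)).Walk c c', p.IsHamiltonian :=
  gridGraph.exists_isHamiltonian_of_adj (even_two_mul n) (by omega) hadj

/-- in the `2n × 2n` grid graph (`n > 1`), any two adjacent cells, neither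
of which is a corner cell, are joined by a Hamiltonian path. -/
theorem exists_hamiltonian_path_between_adjacent_noncorner (n : ℕ) (hn : 1 < n)
    (c c' : Fin (2 * n) × Fin (2 * n)) (hadj : (gridGraph (2 * n)).Adj c c')
    (hc : ¬ ((c.1.val = 0 ∨ c.1.val = 2 * n - 1) ∧ (c.2.val = 0 ∨ c.2.val = 2 * n - 1)))
    (hc' : ¬ ((c'.1.val = 0 ∨ c'.1.val = 2 * n - 1) ∧ (c'.2.val = 0 ∨ c'.2.val = 2 * n - 1))) :
    ∃ p : (gridGraph (2 * n)).Walk c c', p.IsHamiltonian :=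
  exists_hamiltonian_path_between_adjacent_noncorner_general n hn c c' hadj
end

section
/- In the 4×4 grid graph there is no Hamiltonian path between the cells (1,1) and (1,3) (the paper's cells K(2,2) and K(2,4) in 1-indexed notation); equivalently, every path between these two non-adjacent cells in the same row has length at most 14, strictly less than the maximum possible length 4² − 1 = 15. -/
/-! A Hamiltonian path in a graph with an even number of vertices has odd length, so it must
join the two colour classes of any 2-colouring. The chessboard colouring of the `4 × 4` grid
gives `(1,1)` and `(1,3)` the same colour. -/

theorem SimpleGraph.Walk.IsHamiltonian.color_ne_of_even_card
    {V : Type*} [Fintype V] [DecidableEq V] {G : SimpleGraph V} (c : G.Coloring Bool) {u v : V} {p : G.Walk u v}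
    (hp : p.IsHamiltonian) (hV : Even (Fintype.card V)) : c u ≠ c v := by
  have hpos : 0 < Fintype.card V := Fintype.card_pos_iff.mpr ⟨u⟩
  have hodd : Odd p.length := by
    rw [hp.length_eq]
    exact Nat.Even.sub_odd hpos hV odd_one
  intro huv
  simpa [huv] using (c.odd_length_iff_not_congr p).mp hodd

def gridGraph.chessboardColoring (m : ℕ) : (gridGraph m).Coloring Bool :=
  SimpleGraph.Coloring.mk (fun c ↦ decide (Even ((c.1 : ℕ) + c.2))) fun {c c'} hadj ↦ by
    have h : ((c.1 : ℤ) - c'.1).natAbs + ((c.2 : ℤ) - c'.2).natAbs = 1 := hadj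
    simp only [ne_eq, decide_eq_decide, Nat.even_iff]
    omega

/-- in the `4 × 4` grid graph there is no Hamiltonian path between the
cells `(1,1)` and `(1,3)`. -/
theorem no_hamiltonian_path_K22_K24 :
    ¬ ∃ p : (gridGraph 4).Walk ((1, 1) : Fin 4 × Fin 4) ((1, 3) : Fin 4 × Fin 4),
      p.IsHamiltonian := by
  rintro ⟨p, hp⟩
  exact hp.color_ne_of_even_card (gridGraph.chessboardColoring 4) (by decide) rfl
end

section
/- Let n ≥ 1. For any two distinct cells (i,i) and (i',i') lying on the main diagonal of the (2n+1)×(2n+1) grid graph, there exists a Hamiltonian path from (i,i) to (i',i'); i.e., any two cells on the main diagonal can be connected by a straight, non-overlapping walk of maximum length (2n+1)² − 1. -/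
/-!
Induction on `n`, peeling off the L-shaped band of width two formed by the last two rows and
columns of the `(2n+3)`-grid. If both endpoints lie in the inner `(2n+1)`-grid, a Hamiltonian
path there passes through its corner `(2n, 2n)`, entered (after transposing, if necessary) from
`(2n, 2n-1)`; the band is inserted as a detour on that edge. If both endpoints are at least `2`,
the point reflection through the centre of the grid reduces to the previous case. Otherwise one
endpoint is `(a, a)` with `a ≤ 1` and the other lies in the band; a path from `(a, a)` to
`(2n, 2n)` in the inner grid is continued through the band. The `3 × 3` grid is obtained in the
same way from the one-cell grid.
-/

open Set

variable {α β : Type*}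

structure IsHamiltonianChain (R : α → α → Prop) (S : Set α) (a b : α) (l : List α) :
    Prop where
  isChain : l.IsChain R
  nodup : l.Nodup
  head?_eq : l.head? = some a
  getLast?_eq : l.getLast? = some b
  mem_iff : ∀ x, x ∈ l ↔ x ∈ S

namespace IsHamiltonianChain

variable {R : α → α → Prop} {S T : Set α} {a b c d : α} {l l₁ l₂ : List α}

theorem singleton (R : α → α → Prop) (a : α) : IsHamiltonianChain R {a} a a [a] :=
  ⟨.singleton a, List.nodup_singleton a, rfl, rfl, fun _ => List.mem_singleton⟩

theorem ne_nil (h : IsHamiltonianChain R S a b l) : l ≠ [] := by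
  rintro rfl; cases h.head?_eq

theorem head_mem (h : IsHamiltonianChain R S a b l) : a ∈ S :=
  (h.mem_iff a).1 (List.mem_of_mem_head? h.head?_eq)

theorem append (h₁ : IsHamiltonianChain R S a b l₁) (h₂ : IsHamiltonianChain R T c d l₂)
    (hbc : R b c) (hST : Disjoint S T) : IsHamiltonianChain R (S ∪ T) a d (l₁ ++ l₂) where
  isChain := List.isChain_append.2 ⟨h₁.isChain, h₂.isChain, by
    rintro x hx y hy
    rw [h₁.getLast?_eq, Option.mem_some_iff] at hx
    rw [h₂.head?_eq, Option.mem_some_iff] at hy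
    exact hx ▸ hy ▸ hbc⟩
  nodup := List.nodup_append'.2 ⟨h₁.nodup, h₂.nodup, fun x hx₁ hx₂ =>
    hST.notMem_of_mem_left ((h₁.mem_iff x).1 hx₁) ((h₂.mem_iff x).1 hx₂)⟩
  head?_eq := by rw [List.head?_append_of_ne_nil _ h₁.ne_nil, h₁.head?_eq]
  getLast?_eq := by rw [List.getLast?_append_of_ne_nil _ h₂.ne_nil, h₂.getLast?_eq]
  mem_iff x := by rw [List.mem_append, h₁.mem_iff, h₂.mem_iff, mem_union]

theorem reverse (hR : ∀ ⦃x y⦄, R x y → R y x) (h : IsHamiltonianChain R S a b l) :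
    IsHamiltonianChain R S b a l.reverse where
  isChain := List.isChain_reverse.2 (h.isChain.imp fun _ _ h => hR h)
  nodup := List.nodup_reverse.2 h.nodup
  head?_eq := by rw [List.head?_reverse, h.getLast?_eq]
  getLast?_eq := by rw [List.getLast?_reverse, h.head?_eq]
  mem_iff x := by rw [List.mem_reverse, h.mem_iff]

theorem map {R' : β → β → Prop} {f : α → β} (h : IsHamiltonianChain R S a b l)
    (hf : InjOn f S) (hR : ∀ x ∈ S, ∀ y ∈ S, R x y → R' (f x) (f y)) :
    IsHamiltonianChain R' (f '' S) (f a) (f b) (l.map f) where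
  isChain := (List.isChain_map f).2 <| h.isChain.imp_of_mem_imp fun x y hx hy =>
    hR x ((h.mem_iff x).1 hx) y ((h.mem_iff y).1 hy)
  nodup := h.nodup.map_on fun x hx y hy => hf ((h.mem_iff x).1 hx) ((h.mem_iff y).1 hy)
  head?_eq := by rw [List.head?_map, h.head?_eq, Option.map_some]
  getLast?_eq := by rw [List.getLast?_map, h.getLast?_eq, Option.map_some]
  mem_iff y := by simp only [List.mem_map, h.mem_iff, mem_image]

theorem exists_split (h : IsHamiltonianChain R S a b l) {y : α} (hy : y ∈ S) (hya : y ≠ a) :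
    ∃ X Y x, l = X ++ y :: Y ∧ X.getLast? = some x ∧ R x y := by
  obtain ⟨X, Y, rfl⟩ := List.append_of_mem ((h.mem_iff y).2 hy)
  obtain ⟨x, hx⟩ : ∃ x, X.getLast? = some x := by
    cases hX : X.getLast? with
    | none =>
      rw [List.getLast?_eq_none_iff] at hX
      subst hX
      exact absurd (Option.some_inj.1 h.head?_eq) hya
    | some x => exact ⟨x, rfl⟩
  exact ⟨X, Y, x, rfl, hx, (List.isChain_append.1 h.isChain).2.2 x hx y rfl⟩

theorem insert {X Y l : List α} {x y s t : α} (h : IsHamiltonianChain R S a b (X ++ y :: Y))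
    (hx : X.getLast? = some x) (hl : IsHamiltonianChain R T s t l) (hxs : R x s) (hty : R t y)
    (hST : Disjoint S T) : IsHamiltonianChain R (S ∪ T) a b (X ++ l ++ y :: Y) := by
  obtain ⟨hcX, hcY, -⟩ := List.isChain_append.1 h.isChain
  obtain ⟨hnX, hnY, hXY⟩ := List.nodup_append'.1 h.nodup
  have hX_ne : X ≠ [] := by rintro rfl; cases hx
  have hXS : {z | z ∈ X} ⊆ S := fun z hz => (h.mem_iff z).1 (List.mem_append_left _ hz)
  have hYS : {z | z ∈ y :: Y} ⊆ S := fun z hz => (h.mem_iff z).1 (List.mem_append_right _ hz)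
  have hX' : IsHamiltonianChain R {z | z ∈ X} a x X :=
    ⟨hcX, hnX, by rw [← h.head?_eq, List.head?_append_of_ne_nil _ hX_ne], hx,
      fun _ => Iff.rfl⟩
  have hY' : IsHamiltonianChain R {z | z ∈ y :: Y} y b (y :: Y) :=
    ⟨hcY, hnY, rfl, by rw [← h.getLast?_eq, List.getLast?_append_cons], fun _ => Iff.rfl⟩
  have hdisj : Disjoint {z | z ∈ X} (T ∪ {z | z ∈ y :: Y}) :=
    disjoint_union_right.2 ⟨hST.mono_left hXS, disjoint_left.2 fun _ hzX hzY => hXY hzX hzY⟩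
  have := hX'.append (hl.append hY' hty (hST.symm.mono_right hYS)) hxs hdisj
  rw [List.append_assoc]
  convert this using 1
  ext z
  simp only [mem_union, mem_ofPred_eq, ← h.mem_iff, List.mem_append]
  tauto

theorem exists_walk_isHamiltonian [DecidableEq α] {G : SimpleGraph α} {u v : α}
    (h : IsHamiltonianChain G.Adj univ u v l) : ∃ p : G.Walk u v, p.IsHamiltonian := by
  have hu : l.head h.ne_nil = u :=
    Option.some_inj.1 (by rw [← h.head?_eq, List.head?_eq_some_head])
  have hv : l.getLast h.ne_nil = v :=
    Option.some_inj.1 (by rw [← h.getLast?_eq, List.getLast?_eq_some_getLast])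
  refine ⟨(SimpleGraph.Walk.ofSupport l h.ne_nil h.isChain).copy hu hv, fun w => ?_⟩
  rw [SimpleGraph.Walk.support_copy, SimpleGraph.Walk.support_ofSupport]
  exact List.count_eq_one_of_mem h.nodup ((h.mem_iff w).2 trivial)

end IsHamiltonianChain

theorem isHamiltonianChain_range (n : ℕ) :
    IsHamiltonianChain (fun i j => j = i + 1) (Iic n) 0 n (List.range (n + 1)) where
  isChain := (List.isChain_range_succ _ n).2 fun _ _ => rfl
  nodup := List.nodup_range
  head?_eq := by simp [List.range_succ_eq_map]
  getLast?_eq := by simp [List.range_succ]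
  mem_iff i := by simp

/-- The formula of `gridGraph`, so that adjacency transfers to `Fin m × Fin m` unchanged. -/
def gridAdj (p q : ℕ × ℕ) : Prop :=
  ((p.1 : ℤ) - q.1).natAbs + ((p.2 : ℤ) - q.2).natAbs = 1

theorem gridAdj_symm : ∀ ⦃p q : ℕ × ℕ⦄, gridAdj p q → gridAdj q p := by
  unfold gridAdj; omega

def rowRun (r n : ℕ) : List (ℕ × ℕ) := (List.range (n + 1)).map (r, ·)

def colRun (c n : ℕ) : List (ℕ × ℕ) := (List.range (n + 1)).map (·, c)

theorem isHamiltonianChain_rowRun (r n : ℕ) :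
    IsHamiltonianChain gridAdj ({r} ×ˢ Iic n) (r, 0) (r, n) (rowRun r n) := by
  rw [singleton_prod]
  exact (isHamiltonianChain_range n).map (Prod.mk_right_injective r).injOn
    fun i _ j _ hij => by unfold gridAdj; omega

theorem isHamiltonianChain_colRun (c n : ℕ) :
    IsHamiltonianChain gridAdj (Iic n ×ˢ {c}) (0, c) (n, c) (colRun c n) := by
  rw [prod_singleton]
  exact (isHamiltonianChain_range n).map (Prod.mk_left_injective c).injOn
    fun i _ j _ hij => by unfold gridAdj; omega

def lBand (k : ℕ) : Set (ℕ × ℕ) := Iic (k + 2) ×ˢ Iic (k + 2) \ Iic k ×ˢ Iic k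

theorem union_lBand (k : ℕ) : Iic k ×ˢ Iic k ∪ lBand k = Iic (k + 2) ×ˢ Iic (k + 2) :=
  union_sdiff_cancel (prod_mono (Iic_subset_Iic.2 (by omega)) (Iic_subset_Iic.2 (by omega)))

theorem disjoint_lBand (k : ℕ) : Disjoint (Iic k ×ˢ Iic k) (lBand k) :=
  disjoint_sdiff_right

theorem exists_isHamiltonianChain_lBand_detour {k : ℕ} (hk : 1 ≤ k) :
    ∃ l, IsHamiltonianChain gridAdj (lBand k) (k + 1, k - 1) (k + 1, k) l := by
  have h := (((((isHamiltonianChain_rowRun (k + 1) (k - 1)).reverse gridAdj_symm).append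
    (isHamiltonianChain_rowRun (k + 2) (k + 2)) ?_ ?_).append
    ((isHamiltonianChain_colRun (k + 2) (k + 1)).reverse gridAdj_symm) ?_ ?_).append
    (isHamiltonianChain_colRun (k + 1) (k + 1)) ?_ ?_).append
    (IsHamiltonianChain.singleton gridAdj (k + 1, k)) ?_ ?_
  · exact ⟨_, by
      convert h using 1
      ext ⟨x, y⟩
      simp only [lBand, mem_sdiff, mem_union, mem_prod, mem_singleton_iff, mem_Iic, Prod.mk.injEq]
      omega⟩
  all_goals first
    | (simp only [gridAdj]; omega)
    | (rw [disjoint_left]; rintro ⟨x, y⟩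
       simp only [mem_union, mem_prod, mem_singleton_iff, mem_Iic, Prod.mk.injEq]; omega)

theorem exists_isHamiltonianChain_lBand_to_diag_succ (k : ℕ) :
    ∃ l, IsHamiltonianChain gridAdj (lBand k) (k + 1, k) (k + 1, k + 1) l := by
  have h := ((((isHamiltonianChain_rowRun (k + 1) k).reverse gridAdj_symm).append
    (isHamiltonianChain_rowRun (k + 2) (k + 2)) ?_ ?_).append
    ((isHamiltonianChain_colRun (k + 2) (k + 1)).reverse gridAdj_symm) ?_ ?_).append
    (isHamiltonianChain_colRun (k + 1) (k + 1)) ?_ ?_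
  · exact ⟨_, by
      convert h using 1
      ext ⟨x, y⟩
      simp only [lBand, mem_sdiff, mem_union, mem_prod, mem_singleton_iff, mem_Iic]
      omega⟩
  all_goals first
    | (simp only [gridAdj]; omega)
    | (rw [disjoint_left]; rintro ⟨x, y⟩
       simp only [mem_union, mem_prod, mem_singleton_iff, mem_Iic]; omega)

theorem exists_isHamiltonianChain_lBand_to_diag_succ_succ (k : ℕ) :
    ∃ l, IsHamiltonianChain gridAdj (lBand k) (k + 1, k) (k + 2, k + 2) l := by
  have h := ((((isHamiltonianChain_rowRun (k + 1) k).reverse gridAdj_symm).append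
    (isHamiltonianChain_rowRun (k + 2) (k + 1)) ?_ ?_).append
    ((isHamiltonianChain_colRun (k + 1) (k + 1)).reverse gridAdj_symm) ?_ ?_).append
    (isHamiltonianChain_colRun (k + 2) (k + 2)) ?_ ?_
  · exact ⟨_, by
      convert h using 1
      ext ⟨x, y⟩
      simp only [lBand, mem_sdiff, mem_union, mem_prod, mem_singleton_iff, mem_Iic]
      omega⟩
  all_goals first
    | (simp only [gridAdj]; omega)
    | (rw [disjoint_left]; rintro ⟨x, y⟩
       simp only [mem_union, mem_prod, mem_singleton_iff, mem_Iic]; omega)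

/-- Indexed by the largest coordinate: the grid `{0, …, k}²` has side `k + 1`. -/
def HasDiagonalHamPath (k a b : ℕ) : Prop :=
  ∃ l, IsHamiltonianChain gridAdj (Iic k ×ˢ Iic k) (a, a) (b, b) l

namespace HasDiagonalHamPath

variable {k a b : ℕ}

theorem symm (h : HasDiagonalHamPath k a b) : HasDiagonalHamPath k b a :=
  let ⟨l, hl⟩ := h; ⟨l.reverse, hl.reverse gridAdj_symm⟩

theorem zero : HasDiagonalHamPath 0 0 0 :=
  ⟨[(0, 0)], by convert IsHamiltonianChain.singleton gridAdj (0, 0); ext ⟨x, y⟩; simp⟩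

theorem reflect (h : HasDiagonalHamPath k a b) : HasDiagonalHamPath k (k - a) (k - b) := by
  obtain ⟨l, hl⟩ := h
  let ρ : ℕ × ℕ → ℕ × ℕ := fun p => (k - p.1, k - p.2)
  have hρ : ρ '' (Iic k ×ˢ Iic k) = Iic k ×ˢ Iic k := by
    ext ⟨x, y⟩
    simp only [ρ, mem_image, mem_prod, mem_Iic, Prod.mk.injEq, Prod.exists]
    exact ⟨by omega, fun h => ⟨k - x, k - y, by omega⟩⟩
  refine ⟨l.map ρ, hρ ▸ hl.map ?_ ?_⟩
  · rintro ⟨x, y⟩ hxy ⟨x', y'⟩ hxy' h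
    simp only [ρ, mem_prod, mem_Iic, Prod.mk.injEq] at hxy hxy' h ⊢; omega
  · rintro ⟨x, y⟩ hxy ⟨x', y'⟩ hxy' h
    simp only [ρ, gridAdj, mem_prod, mem_Iic] at hxy hxy' h ⊢; omega

/-- The corner `(k, k)` has only the neighbours `(k, k - 1)` and `(k - 1, k)` in the grid, and
transposition exchanges them while fixing the diagonal. -/
theorem exists_split_corner (h : HasDiagonalHamPath k a b) (ha : a ≠ k) :
    ∃ X Y, IsHamiltonianChain gridAdj (Iic k ×ˢ Iic k) (a, a) (b, b) (X ++ (k, k) :: Y) ∧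
      X.getLast? = some (k, k - 1) := by
  obtain ⟨l, hl⟩ := h
  obtain ⟨X, Y, ⟨x, y⟩, rfl, hX, hxy⟩ :=
    hl.exists_split (y := (k, k)) (by simp) (by simpa using ha.symm)
  have hxy_mem : (x, y) ∈ Iic k ×ˢ Iic k :=
    (hl.mem_iff _).1 (List.mem_append_left _ (List.mem_of_getLast? hX))
  simp only [mem_prod, mem_Iic, gridAdj] at hxy hxy_mem
  obtain hx | hx : (x, y) = (k, k - 1) ∨ (x, y) = (k - 1, k) := by
    simp only [Prod.mk.injEq]; omega
  all_goals rw [hx] at hX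
  · exact ⟨X, Y, hl, hX⟩
  · refine ⟨X.map Prod.swap, Y.map Prod.swap, ?_, by simp [List.getLast?_map, hX]⟩
    have := hl.map (R' := gridAdj) Prod.swap_injective.injOn <| by
      rintro ⟨p₁, p₂⟩ - ⟨q₁, q₂⟩ - hpq
      simp only [gridAdj, Prod.swap_prod_mk] at hpq ⊢; omega
    simpa only [image_swap_prod, List.map_append, List.map_cons, Prod.swap_prod_mk] using this

theorem detour (h : HasDiagonalHamPath k a b) (ha : a ≠ k) : HasDiagonalHamPath (k + 2) a b := by
  have hk : 1 ≤ k := by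
    obtain ⟨l, hl⟩ := h
    have := hl.head_mem
    simp only [mem_prod, mem_Iic] at this
    omega
  obtain ⟨X, Y, hl, hX⟩ := h.exists_split_corner ha
  obtain ⟨s, hs⟩ := exists_isHamiltonianChain_lBand_detour hk
  have := hl.insert hX hs (by simp only [gridAdj]; omega) (by simp only [gridAdj]; omega)
    (disjoint_lBand k)
  exact ⟨_, union_lBand k ▸ this⟩

theorem extend (h : HasDiagonalHamPath k a k) (hb : k < b) (hb' : b ≤ k + 2) :
    HasDiagonalHamPath (k + 2) a b := by
  obtain ⟨l, hl⟩ := h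
  obtain ⟨s, hs⟩ : ∃ s, IsHamiltonianChain gridAdj (lBand k) (k + 1, k) (b, b) s := by
    obtain rfl | rfl : b = k + 1 ∨ b = k + 2 := by omega
    exacts [exists_isHamiltonianChain_lBand_to_diag_succ k,
      exists_isHamiltonianChain_lBand_to_diag_succ_succ k]
  have := hl.append hs (by simp only [gridAdj]; omega) (disjoint_lBand k)
  exact ⟨_, union_lBand k ▸ this⟩

theorem exists_walk_isHamiltonian {i j : Fin (k + 1)} (h : HasDiagonalHamPath k i j) :
    ∃ p : (gridGraph (k + 1)).Walk (i, i) (j, j), p.IsHamiltonian := by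
  obtain ⟨l, hl⟩ := h
  let g : ℕ × ℕ → Fin (k + 1) × Fin (k + 1) := fun p => (Fin.ofNat _ p.1, Fin.ofNat _ p.2)
  have hval {p : ℕ × ℕ} (hp : p ∈ Iic k ×ˢ Iic k) :
      ((g p).1 : ℕ) = p.1 ∧ ((g p).2 : ℕ) = p.2 := by
    simp only [mem_prod, mem_Iic] at hp
    simp only [g, Fin.val_ofNat]
    constructor <;> apply Nat.mod_eq_of_lt <;> omega
  have hg : g '' (Iic k ×ˢ Iic k) = univ := by
    refine eq_univ_of_forall fun c => ⟨(c.1, c.2), ?_, by simp [g]⟩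
    simp only [mem_prod, mem_Iic]
    omega
  have := hl.map (R' := (gridGraph (k + 1)).Adj) (f := g) ?_ ?_
  · rw [hg] at this
    simp only [g, Fin.ofNat_val_eq_self] at this
    exact this.exists_walk_isHamiltonian
  · intro p hp q hq hpq
    rw [Prod.ext_iff, ← (hval hp).1, ← (hval hp).2, ← (hval hq).1, ← (hval hq).2, hpq]
    exact ⟨rfl, rfl⟩
  · intro p hp q hq hpq
    have := hval hp; have := hval hq
    simp only [gridGraph, gridAdj] at hpq ⊢
    omega

end HasDiagonalHamPath

open HasDiagonalHamPath in
theorem hasDiagonalHamPath_of_lt {n : ℕ} (hn : 1 ≤ n) {a b : ℕ} (hab : a < b)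
    (hb : b ≤ 2 * n) :
    HasDiagonalHamPath (2 * n) a b := by
  induction n, hn using Nat.le_induction generalizing a b with
  | base =>
    obtain rfl | rfl : a = 0 ∨ a = 1 := by omega
    · exact zero.extend (by omega) hb
    · obtain rfl : b = 2 := by omega
      exact (zero.extend (b := 1) one_pos (by omega)).reflect.symm
  | succ n hn ih =>
    rw [show 2 * (n + 1) = 2 * n + 2 by ring]
    by_cases hbn : b ≤ 2 * n
    · exact (ih hab hbn).detour (by omega)
    by_cases ha : 2 ≤ a
    · have := ((ih (a := 2 * n + 2 - b) (b := 2 * n + 2 - a) (by omega) (by omega)).detour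
        (by omega)).reflect.symm
      convert this using 1 <;> omega
    · exact (ih (b := 2 * n) (by omega) le_rfl).extend (by omega) (by omega)

/-- in the `(2n+1) × (2n+1)` grid graph (`n ≥ 1`), any two distinct cells
on the main diagonal are joined by a Hamiltonian path. -/
theorem exists_hamiltonian_path_main_diagonal (n : ℕ) (hn : 1 ≤ n)
    (i i' : Fin (2 * n + 1)) (hne : i ≠ i') :
    ∃ p : (gridGraph (2 * n + 1)).Walk (i, i) (i', i'), p.IsHamiltonian := by
  obtain h | h := (Fin.val_ne_of_ne hne).lt_or_gt
  · exact (hasDiagonalHamPath_of_lt hn h (by omega)).exists_walk_isHamiltonian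
  · exact (hasDiagonalHamPath_of_lt hn h (by omega)).symm.exists_walk_isHamiltonian
end

section
/- Let n ≥ 1 and consider the (2n+1)×(2n+1) grid graph with 0-indexed cells. Let (i,j) and (i,j') be two distinct cells in the same row such that i + j and i + j' are both even (so the cells are separated by at least one cell in between). Then there exists a Hamiltonian path from (i,j) to (i,j'). Likewise, for two distinct cells (i,j) and (i',j) in the same column with i + j and i' + j both even, there exists a Hamiltonian path from (i,j) to (i',j). -/
namespace SimpleGraph

variable {V W : Type*} {G : SimpleGraph V} {S T : Finset V} {s t a b a' b' : V}
  {l l₁ l₂ q : List V}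

variable (G) in
structure IsHamPathOn (S : Finset V) (s t : V) (l : List V) : Prop where
  isChain : l.IsChain G.Adj
  nodup : l.Nodup
  mem_iff : ∀ v, v ∈ l ↔ v ∈ S
  head?_eq : l.head? = some s
  getLast?_eq : l.getLast? = some t

namespace IsHamPathOn

theorem left_mem (hl : G.IsHamPathOn S s t l) : s ∈ S :=
  (hl.mem_iff s).1 (List.mem_of_mem_head? hl.head?_eq)

theorem right_mem (hl : G.IsHamPathOn S s t l) : t ∈ S :=
  (hl.mem_iff t).1 (List.mem_of_mem_getLast? hl.getLast?_eq)

theorem reverse (hl : G.IsHamPathOn S s t l) : G.IsHamPathOn S t s l.reverse where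
  isChain := List.isChain_reverse.2 (hl.isChain.imp fun _ _ h => h.symm)
  nodup := List.nodup_reverse.2 hl.nodup
  mem_iff v := List.mem_reverse.trans (hl.mem_iff v)
  head?_eq := by rw [List.head?_reverse, hl.getLast?_eq]
  getLast?_eq := by rw [List.getLast?_reverse, hl.head?_eq]

theorem map [DecidableEq W] {H : SimpleGraph W} {f : V → W} (hl : G.IsHamPathOn S s t l)
    (hf : Set.InjOn f S) (hadj : ∀ u ∈ S, ∀ v ∈ S, G.Adj u v → H.Adj (f u) (f v)) :
    H.IsHamPathOn (S.image f) (f s) (f t) (l.map f) where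
  isChain := List.isChain_map_of_isChain f (R := fun u v => G.Adj u v ∧ u ∈ S ∧ v ∈ S)
    (fun u v h => hadj u h.2.1 v h.2.2 h.1)
    (hl.isChain.imp_of_mem_imp fun u v hu hv h => ⟨h, (hl.mem_iff u).1 hu, (hl.mem_iff v).1 hv⟩)
  nodup := hl.nodup.map_on fun u hu v hv => hf ((hl.mem_iff u).1 hu) ((hl.mem_iff v).1 hv)
  mem_iff w := by simp [hl.mem_iff]
  head?_eq := by rw [List.head?_map, hl.head?_eq, Option.map_some]
  getLast?_eq := by rw [List.getLast?_map, hl.getLast?_eq, Option.map_some]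

theorem insert [DecidableEq V] (hl : G.IsHamPathOn S s t (l₁ ++ l₂))
    (hq : G.IsHamPathOn T a' b' q) (hST : Disjoint S T) (ha : l₁.getLast? = some a)
    (hb : l₂.head? = some b) (haa' : G.Adj a a') (hb'b : G.Adj b' b) :
    G.IsHamPathOn (S ∪ T) s t (l₁ ++ q ++ l₂) := by
  have hl₁ : l₁ ≠ [] := by rintro rfl; simp at ha
  have hl₂ : l₂ ≠ [] := by rintro rfl; simp at hb
  obtain ⟨hc₁, hc₂, -⟩ := List.isChain_append.1 hl.isChain
  obtain ⟨hn₁, hn₂, hn₁₂⟩ := List.nodup_append.1 hl.nodup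
  have hS : ∀ v, v ∈ l₁ ∨ v ∈ l₂ ↔ v ∈ S := fun v => List.mem_append.symm.trans (hl.mem_iff v)
  refine ⟨?_, ?_, ?_, ?_, ?_⟩
  · refine (hc₁.append hq.isChain ?_).append hc₂ ?_
    · simp [ha, hq.head?_eq, haa']
    · simp [List.getLast?_append, hq.getLast?_eq, hb, hb'b]
  · refine List.nodup_append.2 ⟨List.nodup_append.2 ⟨hn₁, hq.nodup, ?_⟩, hn₂, ?_⟩
    · rintro u hu v hv rfl
      exact Finset.disjoint_left.1 hST ((hS u).1 (.inl hu)) ((hq.mem_iff u).1 hv)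
    · rintro u hu v hv rfl
      rcases List.mem_append.1 hu with hu | hu
      · exact hn₁₂ u hu u hv rfl
      · exact Finset.disjoint_left.1 hST ((hS u).1 (.inr hv)) ((hq.mem_iff u).1 hu)
  · intro v
    rw [Finset.mem_union, ← hS, ← hq.mem_iff]
    simp only [List.mem_append]
    tauto
  · rw [List.append_assoc, List.head?_append_of_ne_nil _ hl₁, ← hl.head?_eq,
      List.head?_append_of_ne_nil _ hl₁]
  · rw [List.getLast?_append_of_ne_nil _ hl₂, ← hl.getLast?_eq,
      List.getLast?_append_of_ne_nil _ hl₂]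

theorem exists_eq_append_of_mem (hl : G.IsHamPathOn S s t l) {v : V} (hv : v ∈ S)
    (hvs : v ≠ s) (hvt : v ≠ t) :
    ∃ l₁ u z l₂, l = l₁ ++ u :: v :: z :: l₂ ∧ u ≠ z ∧ G.Adj u v ∧ G.Adj v z := by
  obtain ⟨l₁, l₂, rfl⟩ := List.append_of_mem ((hl.mem_iff v).2 hv)
  obtain rfl | ⟨l₁, u, rfl⟩ := l₁.eq_nil_or_concat'
  · exact absurd (by simpa using hl.head?_eq) hvs
  obtain _ | ⟨z, l₂⟩ := l₂
  · exact absurd (by simpa using hl.getLast?_eq) hvt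
  simp only [List.append_assoc, List.singleton_append] at hl ⊢
  refine ⟨l₁, u, z, l₂, rfl, ?_, ?_⟩
  · rintro rfl
    simpa using (List.nodup_append.1 hl.nodup).2.1
  · have := (List.isChain_append.1 hl.isChain).2.1
    simp only [List.isChain_cons_cons] at this
    exact ⟨this.1, this.2.1⟩

theorem exists_isHamiltonian [Fintype V] [DecidableEq V]
    (hl : G.IsHamPathOn Finset.univ s t l) : ∃ p : G.Walk s t, p.IsHamiltonian := by
  have hne : l ≠ [] := by rintro rfl; exact absurd hl.head?_eq (by simp)
  have hs : l.head hne = s := by simpa [List.head?_eq_some_head hne] using hl.head?_eq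
  have ht : l.getLast hne = t := by simpa [List.getLast?_eq_some_getLast hne] using hl.getLast?_eq
  refine ⟨(Walk.ofSupport l hne hl.isChain).copy hs ht, fun v => ?_⟩
  rw [Walk.support_copy, Walk.support_ofSupport]
  exact List.count_eq_one_of_mem hl.nodup ((hl.mem_iff v).2 (Finset.mem_univ v))

theorem exists_isHamiltonian_comap [Fintype W] [DecidableEq W] {f : W → V}
    (hf : Function.Injective f) {s t : W} (hl : G.IsHamPathOn S (f s) (f t) l)
    (hS : ∀ v, v ∈ S ↔ v ∈ Set.range f) : ∃ p : (G.comap f).Walk s t, p.IsHamiltonian := by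
  obtain ⟨l, rfl⟩ : l ∈ Set.range (List.map f) := by
    rw [Set.range_list_map]
    exact fun v hv => (hS v).1 ((hl.mem_iff v).1 hv)
  refine exists_isHamiltonian ⟨(List.isChain_map f).1 hl.isChain,
    (List.nodup_map_iff hf).1 hl.nodup, fun v => ?_, Option.map_injective hf ?_,
    Option.map_injective hf ?_⟩
  · simpa [(List.mem_map_of_injective hf).symm, hl.mem_iff] using (hS (f v)).2 ⟨v, rfl⟩
  · simpa [List.head?_map] using hl.head?_eq
  · simpa [List.getLast?_map] using hl.getLast?_eq

end IsHamPathOn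

theorem isHamPathOn_map_range [DecidableEq V] {f : ℕ → V} {N : ℕ} (hN : 0 < N)
    (hadj : ∀ k, k + 1 < N → G.Adj (f k) (f (k + 1))) (hf : Set.InjOn f (Set.Iio N))
    (hS : ∀ k < N, f k ∈ S) (hcard : S.card ≤ N) :
    G.IsHamPathOn S (f 0) (f (N - 1)) ((List.range N).map f) := by
  have himage : (Finset.range N).image f = S := by
    refine Finset.eq_of_subset_of_card_le (fun v hv => ?_) ?_
    · obtain ⟨k, hk, rfl⟩ := Finset.mem_image.1 hv
      exact hS k (Finset.mem_range.1 hk)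
    · rw [Finset.card_image_of_injOn (by rwa [Finset.coe_range]), Finset.card_range]
      exact hcard
  refine ⟨?_, List.nodup_range.map_on fun a ha b hb => hf (by simpa using ha) (by simpa using hb),
    fun v => ?_, ?_, ?_⟩
  · rw [List.isChain_map, List.isChain_range]
    exact fun k hk => hadj k (by omega)
  · simp [← himage]
  · simp [List.head?_range, hN.ne']
  · simp [List.getLast?_range, hN.ne']

end SimpleGraph

open SimpleGraph

def natGrid : SimpleGraph (ℕ × ℕ) where
  Adj p q := ((p.1 : ℤ) - q.1).natAbs + ((p.2 : ℤ) - q.2).natAbs = 1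
  symm := ⟨fun p q h => by omega⟩
  loopless := ⟨fun p => by simp⟩

theorem natGrid_adj {p q : ℕ × ℕ} :
    natGrid.Adj p q ↔ ((p.1 : ℤ) - q.1).natAbs + ((p.2 : ℤ) - q.2).natAbs = 1 := Iff.rfl

theorem gridGraph_eq_comap (m : ℕ) :
    gridGraph m = natGrid.comap (Prod.map Fin.val Fin.val) := rfl

def rect (h w : ℕ) : Finset (ℕ × ℕ) := Finset.range h ×ˢ Finset.range w

@[simp]
theorem mem_rect {h w : ℕ} {p : ℕ × ℕ} : p ∈ rect h w ↔ p.1 < h ∧ p.2 < w := by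
  simp [rect]

theorem card_rect (h w : ℕ) : (rect h w).card = h * w := by simp [rect]

def HasHamPath (S : Finset (ℕ × ℕ)) (s t : ℕ × ℕ) : Prop := ∃ l, natGrid.IsHamPathOn S s t l

namespace HasHamPath

variable {S : Finset (ℕ × ℕ)} {h w : ℕ} {s t : ℕ × ℕ}

theorem left_mem (hp : HasHamPath S s t) : s ∈ S := hp.elim fun _ hl => hl.left_mem

theorem right_mem (hp : HasHamPath S s t) : t ∈ S := hp.elim fun _ hl => hl.right_mem

theorem symm (hp : HasHamPath S s t) : HasHamPath S t s := hp.elim fun _ hl => ⟨_, hl.reverse⟩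

theorem image {f : ℕ × ℕ → ℕ × ℕ} (hp : HasHamPath S s t) (hf : Set.InjOn f S)
    (hadj : ∀ p ∈ S, ∀ q ∈ S, natGrid.Adj p q → natGrid.Adj (f p) (f q)) :
    HasHamPath (S.image f) (f s) (f t) :=
  hp.elim fun _ hl => ⟨_, hl.map hf hadj⟩

theorem transpose (hp : HasHamPath (rect h w) s t) : HasHamPath (rect w h) s.swap t.swap := by
  have := hp.image Prod.swap_injective.injOn fun p _ q _ hpq => by
    simp only [natGrid_adj, Prod.fst_swap, Prod.snd_swap] at hpq ⊢; omega
  rwa [rect, Finset.image_swap_product] at this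

theorem rotate (hp : HasHamPath (rect h w) s t) :
    HasHamPath (rect h w) (h - 1 - s.1, w - 1 - s.2) (h - 1 - t.1, w - 1 - t.2) := by
  let ρ : ℕ × ℕ → ℕ × ℕ := fun p => (h - 1 - p.1, w - 1 - p.2)
  have hmaps : ∀ p ∈ rect h w, ρ p ∈ rect h w := fun p hp => by
    simp only [mem_rect, ρ] at hp ⊢; omega
  have hρ : ∀ p ∈ rect h w, ρ (ρ p) = p := fun p hp => by
    simp only [mem_rect] at hp
    ext <;> simp only [ρ] <;> omega
  have himage : (rect h w).image ρ = rect h w := Finset.ext fun p =>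
    ⟨fun hp => by obtain ⟨q, hq, rfl⟩ := Finset.mem_image.1 hp; exact hmaps q hq,
      fun hp => Finset.mem_image.2 ⟨ρ p, hmaps p hp, hρ p hp⟩⟩
  have := hp.image (f := ρ) (fun p hp q hq e => by rw [← hρ p hp, e, hρ q hq])
    fun p hp q hq hpq => by simp only [mem_rect, natGrid_adj, ρ] at hp hq hpq ⊢; omega
  rwa [himage] at this

end HasHamPath

theorem hasHamPath_of_enum {S : Finset (ℕ × ℕ)} {f : ℕ → ℕ × ℕ} {N : ℕ} (hN : 0 < N)
    (hadj : ∀ k, k + 1 < N → natGrid.Adj (f k) (f (k + 1))) (hf : Set.InjOn f (Set.Iio N))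
    (hS : ∀ k < N, f k ∈ S) (hcard : S.card ≤ N) {s t : ℕ × ℕ} (hs : f 0 = s)
    (ht : f (N - 1) = t) : HasHamPath S s t :=
  hs ▸ ht ▸ ⟨_, isHamPathOn_map_range hN hadj hf hS hcard⟩

-- Up column 1 from row `r`, down column 0, then up column 1 to row `r + 1`.
def capPath (h r k : ℕ) : ℕ × ℕ :=
  if k ≤ r then (r - k, 1) else if k ≤ r + h then (k - r - 1, 0) else (2 * h + r - k, 1)

theorem hasHamPath_cap {h r : ℕ} (hr : r + 2 ≤ h) : HasHamPath (rect h 2) (r, 1) (r + 1, 1) :=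
  hasHamPath_of_enum (f := capPath h r) (N := 2 * h) (by omega)
    (fun k hk => by unfold capPath; split_ifs <;> simp only [natGrid_adj] <;> omega)
    (fun a ha b hb hab => by
      simp only [Set.mem_Iio] at ha hb
      unfold capPath at hab
      split_ifs at hab <;> simp only [Prod.mk.injEq] at hab <;> omega)
    (fun k hk => by unfold capPath; split_ifs <;> simp only [mem_rect] <;> omega)
    (by rw [card_rect]; omega) (by simp [capPath]) (by unfold capPath; split_ifs <;> grind)

theorem hasHamPath_cap_of_adj {h a b : ℕ} (ha : a < h) (hb : b < h)
    (hab : natGrid.Adj (a, 0) (b, 0)) : HasHamPath (rect h 2) (a, 1) (b, 1) := by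
  rw [natGrid_adj] at hab
  obtain rfl | rfl : b = a + 1 ∨ a = b + 1 := by omega
  · exact hasHamPath_cap (by omega)
  · exact (hasHamPath_cap (by omega)).symm

-- Down column 0, then along row 2, back along row 1 and along row 0.
def cornerPath (w k : ℕ) : ℕ × ℕ :=
  if k < 3 then (k, 0)
  else if k < w + 2 then (2, k - 2)
  else if k < 2 * w + 1 then (1, 2 * w + 1 - k)
  else (0, k - 2 * w)

theorem hasHamPath_rect_three_corners {w : ℕ} (hw : 2 ≤ w) :
    HasHamPath (rect 3 w) (0, 0) (0, w - 1) :=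
  hasHamPath_of_enum (f := cornerPath w) (N := 3 * w) (by omega)
    (fun k hk => by unfold cornerPath; split_ifs <;> simp only [natGrid_adj] <;> omega)
    (fun a ha b hb hab => by
      simp only [Set.mem_Iio] at ha hb
      unfold cornerPath at hab
      split_ifs at hab <;> simp only [Prod.mk.injEq] at hab <;> omega)
    (fun k hk => by unfold cornerPath; split_ifs <;> simp only [mem_rect] <;> omega)
    (by rw [card_rect]) (by simp [cornerPath]) (by unfold cornerPath; split_ifs <;> grind)

-- `(1,1), (0,1)`, down column 0, along row 2, up column `w - 1`, back along row 0 to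
-- column 2, then along row 1.
def innerPath (w k : ℕ) : ℕ × ℕ :=
  if k < 2 then (1 - k, 1)
  else if k < 5 then (k - 2, 0)
  else if k < w + 4 then (2, k - 4)
  else if k < w + 6 then (w + 5 - k, w - 1)
  else if k < 2 * w + 3 then (0, 2 * w + 4 - k)
  else (1, k - (2 * w + 1))

theorem hasHamPath_rect_three_inner {w : ℕ} (hw : 4 ≤ w) :
    HasHamPath (rect 3 w) (1, 1) (1, w - 2) :=
  hasHamPath_of_enum (f := innerPath w) (N := 3 * w) (by omega)
    (fun k hk => by unfold innerPath; split_ifs <;> simp only [natGrid_adj] <;> omega)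
    (fun a ha b hb hab => by
      simp only [Set.mem_Iio] at ha hb
      unfold innerPath at hab
      split_ifs at hab <;> simp only [Prod.mk.injEq] at hab <;> omega)
    (fun k hk => by unfold innerPath; split_ifs <;> simp only [mem_rect] <;> omega)
    (by rw [card_rect]) (by simp [innerPath]) (by unfold innerPath; split_ifs <;> grind)

theorem SimpleGraph.IsHamPathOn.exists_split_column_zero {h w : ℕ} {s t : ℕ × ℕ}
    {l : List (ℕ × ℕ)} (hl : natGrid.IsHamPathOn (rect h w) s t l) (hh : 3 ≤ h) :
    ∃ l₁ l₂ a b, l = l₁ ++ l₂ ∧ l₁.getLast? = some (a, 0) ∧ l₂.head? = some (b, 0) ∧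
      natGrid.Adj (a, 0) (b, 0) := by
  have hw : 0 < w := by have := mem_rect.1 hl.left_mem; omega
  obtain ⟨v, hv, hvst⟩ := Finset.exists_mem_notMem_of_card_lt_card
    (s := {s, t}) (t := (Finset.range 3).image fun r => (r, 0))
    (Finset.card_le_two.trans_lt (by decide))
  obtain ⟨r, hr, rfl⟩ := Finset.mem_image.1 hv
  simp only [Finset.mem_range, Finset.mem_insert, Finset.mem_singleton, not_or] at hr hvst
  obtain ⟨l₁, ⟨u₁, u₂⟩, ⟨z₁, z₂⟩, l₂, rfl, huz, huv, hvz⟩ :=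
    hl.exists_eq_append_of_mem (mem_rect.2 ⟨by omega, hw⟩) hvst.1 hvst.2
  by_cases hu : u₂ = 0
  · subst hu
    exact ⟨l₁ ++ [(u₁, 0)], (r, 0) :: (z₁, z₂) :: l₂, u₁, r, by simp, by simp, rfl, huv⟩
  by_cases hz : z₂ = 0
  · subst hz
    exact ⟨l₁ ++ [(u₁, u₂), (r, 0)], (z₁, 0) :: l₂, r, z₁, by simp, by simp, rfl, hvz⟩
  -- otherwise both path-neighbours of `(r, 0)` would be the cell `(r, 1)`
  rw [natGrid_adj] at huv hvz
  exact absurd (Prod.ext (by omega) (by omega)) huz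

namespace HasHamPath

variable {h w : ℕ} {s t : ℕ × ℕ}

theorem extend_left {i j i' j' : ℕ} (hh : 3 ≤ h) (hp : HasHamPath (rect h w) (i, j) (i', j')) :
    HasHamPath (rect h (w + 2)) (i, j + 2) (i', j' + 2) := by
  obtain ⟨l, hl⟩ := hp
  obtain ⟨l₁, l₂, a, b, rfl, ha, hb, hab⟩ := hl.exists_split_column_zero hh
  have ha' := mem_rect.1 ((hl.mem_iff _).1 (List.mem_append_left _ (List.mem_of_mem_getLast? ha)))
  have hb' := mem_rect.1 ((hl.mem_iff _).1 (List.mem_append_right _ (List.mem_of_mem_head? hb)))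
  obtain ⟨c, hc⟩ := hasHamPath_cap_of_adj ha'.1 hb'.1 hab
  let σ : ℕ × ℕ → ℕ × ℕ := fun p => (p.1, p.2 + 2)
  have hσ := hl.map (H := natGrid) (f := σ) (fun p _ q _ e => by
      simp only [σ, Prod.mk.injEq] at e; exact Prod.ext e.1 (by omega))
    fun p _ q _ hpq => by simp only [natGrid_adj, σ] at hpq ⊢; omega
  rw [List.map_append] at hσ
  have hdisj : Disjoint ((rect h w).image σ) (rect h 2) := by
    rw [Finset.disjoint_left]
    rintro p hp hp'
    obtain ⟨q, -, rfl⟩ := Finset.mem_image.1 hp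
    simp only [mem_rect, σ] at hp'
    omega
  have hrect : (rect h w).image σ ∪ rect h 2 = rect h (w + 2) := by
    ext ⟨x, y⟩
    simp only [Finset.mem_union, Finset.mem_image, mem_rect, σ, Prod.mk.injEq, Prod.exists]
    constructor
    · rintro (⟨x, y, ⟨hx, hy⟩, rfl, rfl⟩ | ⟨hx, hy⟩) <;> omega
    · rintro ⟨hx, hy⟩
      by_cases hy2 : y < 2
      · exact .inr ⟨hx, hy2⟩
      · exact .inl ⟨x, y - 2, ⟨hx, by omega⟩, rfl, by omega⟩
  refine ⟨_, hrect ▸ hσ.insert (a := (a, 2)) (b := (b, 2)) hc hdisj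
    (by simp [List.getLast?_map, ha, σ]) (by simp [List.head?_map, hb, σ]) ?_ ?_⟩ <;>
    simp only [natGrid_adj] <;> omega

theorem extend_right (hh : 3 ≤ h) (hp : HasHamPath (rect h w) s t) :
    HasHamPath (rect h (w + 2)) s t := by
  have hs := mem_rect.1 hp.left_mem
  have ht := mem_rect.1 hp.right_mem
  convert (hp.rotate.extend_left hh).rotate using 1 <;> ext <;> dsimp only <;> omega

theorem extend_top {i j i' j' : ℕ} (hw : 3 ≤ w) (hp : HasHamPath (rect h w) (i, j) (i', j')) :
    HasHamPath (rect (h + 2) w) (i + 2, j) (i' + 2, j') :=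
  (hp.transpose.extend_left hw).transpose

theorem extend_bottom (hw : 3 ≤ w) (hp : HasHamPath (rect h w) s t) :
    HasHamPath (rect (h + 2) w) s t :=
  (hp.transpose.extend_right hw).transpose

end HasHamPath

theorem hasHamPath_rect_three_of_same_row_of_lt {w i j j' : ℕ} (hw : w % 2 = 1) (hi : i < 3)
    (hjj : j < j') (hj' : j' < w) (hij : (i + j) % 2 = 0) (hij' : (i + j') % 2 = 0) :
    HasHamPath (rect 3 w) (i, j) (i, j') := by
  induction w using Nat.strong_induction_on generalizing j j' with
  | _ w ih =>
  by_cases hleft : 2 ≤ j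
  · convert (ih (w - 2) (by omega) (by omega) (j := j - 2) (j' := j' - 2) (by omega) (by omega)
      (by omega) (by omega)).extend_left le_rfl using 2 <;> omega
  by_cases hright : j' + 3 ≤ w
  · convert (ih (w - 2) (by omega) (by omega) hjj (by omega) hij hij').extend_right le_rfl using 2
    omega
  interval_cases i
  · obtain ⟨rfl, rfl⟩ : j = 0 ∧ j' = w - 1 := by omega
    exact hasHamPath_rect_three_corners (by omega)
  · obtain ⟨rfl, rfl⟩ : j = 1 ∧ j' = w - 2 := by omega
    exact hasHamPath_rect_three_inner (by omega)
  · obtain ⟨rfl, rfl⟩ : j = 0 ∧ j' = w - 1 := by omega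
    convert (hasHamPath_rect_three_corners (w := w) (by omega)).rotate.symm using 2 <;> simp

theorem hasHamPath_of_same_row_of_lt {h w i j j' : ℕ} (hh : h % 2 = 1) (hh3 : 3 ≤ h)
    (hw : w % 2 = 1) (hi : i < h) (hjj : j < j') (hj' : j' < w) (hij : (i + j) % 2 = 0)
    (hij' : (i + j') % 2 = 0) : HasHamPath (rect h w) (i, j) (i, j') := by
  induction h using Nat.strong_induction_on generalizing i with
  | _ h ih =>
  obtain rfl | hh5 : h = 3 ∨ 5 ≤ h := by omega
  · exact hasHamPath_rect_three_of_same_row_of_lt hw hi hjj hj' hij hij'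
  by_cases htop : 2 ≤ i
  · convert (ih (h - 2) (by omega) (by omega) (by omega) (i := i - 2) (by omega) (by omega)
      (by omega)).extend_top (by omega) using 2 <;> omega
  · convert (ih (h - 2) (by omega) (by omega) (by omega) (by omega) hij hij').extend_bottom
      (by omega) using 2
    omega

theorem hasHamPath_of_same_row {h w i j j' : ℕ} (hh : h % 2 = 1) (hh3 : 3 ≤ h) (hw : w % 2 = 1)
    (hi : i < h) (hjj : j ≠ j') (hj : j < w) (hj' : j' < w) (hij : (i + j) % 2 = 0)
    (hij' : (i + j') % 2 = 0) : HasHamPath (rect h w) (i, j) (i, j') := by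
  rcases hjj.lt_or_gt with hlt | hlt
  · exact hasHamPath_of_same_row_of_lt hh hh3 hw hi hlt hj' hij hij'
  · exact (hasHamPath_of_same_row_of_lt hh hh3 hw hi hlt hj hij' hij).symm

theorem hasHamPath_of_same_col {h w i i' j : ℕ} (hh : h % 2 = 1) (hw : w % 2 = 1) (hw3 : 3 ≤ w)
    (hii : i ≠ i') (hi : i < h) (hi' : i' < h) (hj : j < w) (hij : (i + j) % 2 = 0)
    (hi'j : (i' + j) % 2 = 0) : HasHamPath (rect h w) (i, j) (i', j) :=
  (hasHamPath_of_same_row hw hw3 hh hj hii hi hi' (by omega) (by omega)).transpose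

theorem HasHamPath.exists_isHamiltonian_gridGraph {m : ℕ} {s t : Fin m × Fin m}
    (hp : HasHamPath (rect m m) (s.1, s.2) (t.1, t.2)) :
    ∃ p : (gridGraph m).Walk s t, p.IsHamiltonian := by
  obtain ⟨l, hl⟩ := hp
  rw [gridGraph_eq_comap]
  refine hl.exists_isHamiltonian_comap (Fin.val_injective.prodMap Fin.val_injective) fun p =>
    ⟨fun hp => ⟨(⟨p.1, (mem_rect.1 hp).1⟩, ⟨p.2, (mem_rect.1 hp).2⟩), rfl⟩, ?_⟩
  rintro ⟨c, rfl⟩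
  simp

/-- in the `(2n+1) × (2n+1)` grid graph (`n ≥ 1`), any two distinct cells
in the same row whose coordinate sums are both even are joined by a Hamiltonian path;
likewise for two distinct cells in the same column with both coordinate sums even. -/
theorem exists_hamiltonian_path_same_row_or_column (n : ℕ) (hn : 1 ≤ n) :
    (∀ i j j' : Fin (2 * n + 1), j ≠ j' →
      (i.val + j.val) % 2 = 0 → (i.val + j'.val) % 2 = 0 →
      ∃ p : (gridGraph (2 * n + 1)).Walk (i, j) (i, j'), p.IsHamiltonian) ∧
    (∀ i i' j : Fin (2 * n + 1), i ≠ i' →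
      (i.val + j.val) % 2 = 0 → (i'.val + j.val) % 2 = 0 →
      ∃ p : (gridGraph (2 * n + 1)).Walk (i, j) (i', j), p.IsHamiltonian) := by
  have hodd : (2 * n + 1) % 2 = 1 := by omega
  refine ⟨fun i j j' hjj hij hij' => ?_, fun i i' j hii hij hi'j => ?_⟩
  · exact (hasHamPath_of_same_row hodd (by omega) hodd i.2 (Fin.val_ne_of_ne hjj) j.2 j'.2 hij
      hij').exists_isHamiltonian_gridGraph
  · exact (hasHamPath_of_same_col hodd hodd (by omega) (Fin.val_ne_of_ne hii) i.2 i'.2 j.2 hij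
      hi'j).exists_isHamiltonian_gridGraph
end
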